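/- arXiv:1910.02417 — 2 statements merged into one kernel-verified Lean document; each statement's English description precedes it below -/
import Mathlib

section
/- A multi-hypergraph H with n ≥ 6 vertices and m hyperedges in which every vertex has degree exactly m−3 admits a proper two-coloring of its vertices if and only if every hyperedge of H has size at least 2 and H is triangle-free. -/
set_option linter.unusedSectionVars false
set_option maxHeartbeats 1000000

open Multiset Finset

namespace TCol

variable {V : Type*} [DecidableEq V] [Fintype V]

def miss (E : Multiset (Finset V)) (x : V) : Multiset (Finset V) :=
  E.filter (fun e => x ∉ e)

section Infra

variable {E : Multiset (Finset V)}

lemma mem_miss {x : V} {g : Finset V} :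
    g ∈ miss E x ↔ g ∈ E ∧ x ∉ g := Multiset.mem_filter

lemma exact3 {v : V} {p q r : Finset V} (hd : miss E v = {p, q, r}) :
    ∀ g ∈ E, v ∉ g → g = p ∨ g = q ∨ g = r := by
  intro g hg hvg
  have hmem : g ∈ miss E v := mem_miss.mpr ⟨hg, hvg⟩
  rw [hd] at hmem
  simpa using hmem

lemma decomp_mem1 {v : V} {p q r : Finset V} (hd : miss E v = {p, q, r}) :
    p ∈ E ∧ v ∉ p := by
  have : p ∈ miss E v := by rw [hd]; simp
  exact mem_miss.mp this

lemma decomp_mem2 {v : V} {p q r : Finset V} (hd : miss E v = {p, q, r}) :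
    q ∈ E ∧ v ∉ q := by
  have : q ∈ miss E v := by rw [hd]; simp
  exact mem_miss.mp this

lemma decomp_mem3 {v : V} {p q r : Finset V} (hd : miss E v = {p, q, r}) :
    r ∈ E ∧ v ∉ r := by
  have : r ∈ miss E v := by rw [hd]; simp
  exact mem_miss.mp this

/-- If `v` misses two distinct sets, there is a (unique) third possibility. -/
lemma third {v : V} (hm3 : Multiset.card (miss E v) = 3) {p q : Finset V}
    (hp : p ∈ E) (hvp : v ∉ p) (hq : q ∈ E) (hvq : v ∉ q) (hpq : p ≠ q) :
    ∃ h, (h ∈ E ∧ v ∉ h) ∧ ∀ g ∈ E, v ∉ g → g = p ∨ g = q ∨ g = h := by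
  obtain ⟨a, b, c, hd⟩ := Multiset.card_eq_three.mp hm3
  have hall := exact3 hd
  have ha := decomp_mem1 hd
  have hb := decomp_mem2 hd
  have hc := decomp_mem3 hd
  have hpm := hall p hp hvp
  have hqm := hall q hq hvq
  rcases hpm with rfl | rfl | rfl <;> rcases hqm with rfl | rfl | rfl
  · exact absurd rfl hpq
  · exact ⟨c, hc, fun g hg hv => by rcases hall g hg hv with h|h|h <;> tauto⟩
  · exact ⟨b, hb, fun g hg hv => by rcases hall g hg hv with h|h|h <;> tauto⟩
  · exact ⟨c, hc, fun g hg hv => by rcases hall g hg hv with h|h|h <;> tauto⟩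
  · exact absurd rfl hpq
  · exact ⟨a, ha, fun g hg hv => by rcases hall g hg hv with h|h|h <;> tauto⟩
  · exact ⟨b, hb, fun g hg hv => by rcases hall g hg hv with h|h|h <;> tauto⟩
  · exact ⟨a, ha, fun g hg hv => by rcases hall g hg hv with h|h|h <;> tauto⟩
  · exact absurd rfl hpq

/-- If `v` misses one known set, there are two other possibilities. -/
lemma rest2 {v : V} (hm3 : Multiset.card (miss E v) = 3) {p : Finset V}
    (hp : p ∈ E) (hvp : v ∉ p) :
    ∃ h1 h2, (h1 ∈ E ∧ v ∉ h1) ∧ (h2 ∈ E ∧ v ∉ h2) ∧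
      ∀ g ∈ E, v ∉ g → g = p ∨ g = h1 ∨ g = h2 := by
  obtain ⟨a, b, c, hd⟩ := Multiset.card_eq_three.mp hm3
  have hall := exact3 hd
  have ha := decomp_mem1 hd
  have hb := decomp_mem2 hd
  have hc := decomp_mem3 hd
  have hpm := hall p hp hvp
  rcases hpm with rfl | rfl | rfl
  · exact ⟨b, c, hb, hc, fun g hg hv => hall g hg hv⟩
  · exact ⟨a, c, ha, hc, fun g hg hv => by rcases hall g hg hv with h|h|h <;> tauto⟩
  · exact ⟨a, b, ha, hb, fun g hg hv => by rcases hall g hg hv with h|h|h <;> tauto⟩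

/-- Overflow principle: a vertex cannot miss four pairwise distinct members. -/
lemma no_four {v : V} (hm3 : Multiset.card (miss E v) = 3) (g1 g2 g3 g4 : Finset V)
    (m1 : g1 ∈ E) (n1 : v ∉ g1) (m2 : g2 ∈ E) (n2 : v ∉ g2)
    (m3 : g3 ∈ E) (n3 : v ∉ g3) (m4 : g4 ∈ E) (n4 : v ∉ g4)
    (d12 : g1 ≠ g2) (d13 : g1 ≠ g3) (d14 : g1 ≠ g4)
    (d23 : g2 ≠ g3) (d24 : g2 ≠ g4) (d34 : g3 ≠ g4) : False := by
  obtain ⟨a, b, c, hd⟩ := Multiset.card_eq_three.mp hm3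
  have hall := exact3 hd
  have h1 := hall g1 m1 n1
  have h2 := hall g2 m2 n2
  have h3 := hall g3 m3 n3
  have h4 := hall g4 m4 n4
  rcases h1 with rfl|rfl|rfl <;> rcases h2 with rfl|rfl|rfl <;>
    rcases h3 with rfl|rfl|rfl <;> rcases h4 with rfl|rfl|rfl <;> tauto

lemma exists_out (s : Finset V) (h : s.card < Fintype.card V) : ∃ u, u ∉ s := by
  by_contra h'
  push_neg at h'
  have hsub : (Finset.univ : Finset V) ⊆ s := fun u _ => h' u
  have := Finset.card_le_card hsub
  rw [Finset.card_univ] at this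
  omega

lemma eq_pair {m : Finset V} {x v : V} (h2 : 2 ≤ m.card) (hs : m ⊆ ({x, v} : Finset V)) :
    m = {x, v} := by
  apply Finset.eq_of_subset_of_card_le hs
  have hle : ({x, v} : Finset V).card ≤ 2 := Finset.card_insert_le x {v} |>.trans (by simp)
  omega

lemma no_tri (hTri : ¬ ∃ a b c : V, a ≠ b ∧ a ≠ c ∧ b ≠ c ∧
      ({a, b} : Finset V) ∈ E ∧ ({a, c} : Finset V) ∈ E ∧ ({b, c} : Finset V) ∈ E)
    {a b c : V} (hab : a ≠ b) (hac : a ≠ c) (hbc : b ≠ c)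
    (h1 : ({a, b} : Finset V) ∈ E) (h2 : ({a, c} : Finset V) ∈ E)
    (h3 : ({b, c} : Finset V) ∈ E) : False :=
  hTri ⟨a, b, c, hab, hac, hbc, h1, h2, h3⟩

end Infra


section TwoA
variable {α : Type*} [DecidableEq α]

lemma exists_in_out {U s : Finset α} (h : s.card < U.card) : ∃ t ∈ U, t ∉ s := by
  by_contra h'
  push_neg at h'
  exact absurd (Finset.card_le_card fun t ht => h' t ht) (by omega)

lemma card_le2 (a b : α) : ({a, b} : Finset α).card ≤ 2 :=
  (Finset.card_insert_le a {b}).trans (by simp)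

lemma card_le3 (a b c : α) : ({a, b, c} : Finset α).card ≤ 3 := by
  refine (Finset.card_insert_le a _).trans ?_
  have := card_le2 b c
  omega

def sngl (u : α) (b1 b2 b3 : Finset α) (γ : α) : Prop :=
  b1.erase u = {γ} ∨ b2.erase u = {γ} ∨ b3.erase u = {γ}

/-- P2 case: u in all three b's, and a1 = {u}. -/
theorem twoA_P2 (U a1 a2 a3 b1 b2 b3 : Finset α)
    (hU : 4 ≤ U.card)
    (ha2U : a2 ⊆ U) (ha3U : a3 ⊆ U)
    (hb1U : b1 ⊆ U) (hb2U : b2 ⊆ U) (hb3U : b3 ⊆ U)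
    (ha2n : a2.Nonempty) (ha3n : a3.Nonempty)
    (hbud : ∀ u ∈ U, (if u ∈ a1 then 0 else 1) + (if u ∈ a2 then 0 else 1) +
      (if u ∈ a3 then 0 else 1) + (if u ∈ b1 then 0 else 1) + (if u ∈ b2 then 0 else 1) +
      (if u ∈ b3 then 0 else 1) ≤ 2)
    (htri : ∀ u : α, (a1 = {u} ∨ a2 = {u} ∨ a3 = {u}) →
      (b1 = {u} ∨ b2 = {u} ∨ b3 = {u}) → False)
    (u : α) (hu1 : u ∈ b1) (hu2 : u ∈ b2) (hu3 : u ∈ b3) (ha1 : a1 = {u}) :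
    ∃ W : Finset α, ((a1 ∩ W).Nonempty ∧ (a2 ∩ W).Nonempty ∧ (a3 ∩ W).Nonempty) ∧
      (¬ b1 ⊆ W ∧ ¬ b2 ⊆ W ∧ ¬ b3 ⊆ W) := by
  have huU : u ∈ U := hb1U hu1
  have herase : ∀ b : Finset α, u ∈ b → (b = {u} → (b1 = {u} ∨ b2 = {u} ∨ b3 = {u})) →
      (b.erase u).Nonempty := by
    intro b hub hsg
    rcases Finset.eq_empty_or_nonempty (b.erase u) with h | h
    · exfalso
      refine htri u (Or.inl ha1) (hsg ?_)
      apply Finset.eq_singleton_iff_unique_mem.mpr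
      refine ⟨hub, fun t ht => ?_⟩
      by_contra htu
      have hmem : t ∈ b.erase u := Finset.mem_erase.mpr ⟨htu, ht⟩
      rw [h] at hmem
      exact absurd hmem (Finset.notMem_empty t)
    · exact h
  have hc1 : (b1.erase u).Nonempty := herase b1 hu1 (fun h => Or.inl h)
  have hc2 : (b2.erase u).Nonempty := herase b2 hu2 (fun h => Or.inr (Or.inl h))
  have hc3 : (b3.erase u).Nonempty := herase b3 hu3 (fun h => Or.inr (Or.inr h))
  have hsubset : ∀ (b : Finset α) (γ t : α), b.erase u = {γ} → t ≠ u → t ≠ γ → t ∉ b := by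
    intro b γ t he htu htγ htb
    have hmem : t ∈ b.erase u := Finset.mem_erase.mpr ⟨htu, htb⟩
    rw [he] at hmem
    exact htγ (Finset.mem_singleton.mp hmem)
  have uniq : ∀ γ δ : α, sngl u b1 b2 b3 γ → sngl u b1 b2 b3 δ → γ = δ := by
    intro γ δ h1 h2
    by_contra hne
    obtain ⟨t, htU, hts⟩ := exists_in_out (lt_of_le_of_lt (card_le3 u γ δ) (show 3 < U.card by omega))
    simp only [Finset.mem_insert, Finset.mem_singleton] at hts
    push_neg at hts
    obtain ⟨htu, htγ, htδ⟩ := hts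
    have hta1 : t ∉ a1 := by rw [ha1]; simp [htu]
    have hb := hbud t htU
    rcases h1 with h1 | h1 | h1 <;> rcases h2 with h2 | h2 | h2
    · exact hne (Finset.singleton_injective (h1.symm.trans h2))
    · have t1 := hsubset b1 γ t h1 htu htγ
      have t2 := hsubset b2 δ t h2 htu htδ
      simp only [if_neg hta1, if_neg t1, if_neg t2] at hb; omega
    · have t1 := hsubset b1 γ t h1 htu htγ
      have t2 := hsubset b3 δ t h2 htu htδ
      simp only [if_neg hta1, if_neg t1, if_neg t2] at hb; omega
    · have t1 := hsubset b2 γ t h1 htu htγ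
      have t2 := hsubset b1 δ t h2 htu htδ
      simp only [if_neg hta1, if_neg t1, if_neg t2] at hb; omega
    · exact hne (Finset.singleton_injective (h1.symm.trans h2))
    · have t1 := hsubset b2 γ t h1 htu htγ
      have t2 := hsubset b3 δ t h2 htu htδ
      simp only [if_neg hta1, if_neg t1, if_neg t2] at hb; omega
    · have t1 := hsubset b3 γ t h1 htu htγ
      have t2 := hsubset b1 δ t h2 htu htδ
      simp only [if_neg hta1, if_neg t1, if_neg t2] at hb; omega
    · have t1 := hsubset b3 γ t h1 htu htγ
      have t2 := hsubset b2 δ t h2 htu htδ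
      simp only [if_neg hta1, if_neg t1, if_neg t2] at hb; omega
    · exact hne (Finset.singleton_injective (h1.symm.trans h2))
  have pick : ∀ (a : Finset α), a.Nonempty → a ⊆ U →
      (∀ t : α, t ∉ a1 → t ∉ a → 2 ≤ (if t ∈ a1 then 0 else 1) + (if t ∈ a2 then 0 else 1) +
        (if t ∈ a3 then 0 else 1)) →
      ∃ w ∈ a, ¬ sngl u b1 b2 b3 w := by
    intro a han haU hcnt
    by_contra hall
    push_neg at hall
    obtain ⟨w0, hw0⟩ := han
    have hs0 := hall w0 hw0
    have hasub : a ⊆ {w0} := by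
      intro t ht
      have := uniq t w0 (hall t ht) hs0
      simp [this]
    obtain ⟨t, htU, hts⟩ := exists_in_out (lt_of_le_of_lt (card_le2 u w0) (show 2 < U.card by omega))
    simp only [Finset.mem_insert, Finset.mem_singleton] at hts
    push_neg at hts
    obtain ⟨htu, htw0⟩ := hts
    have hta1 : t ∉ a1 := by rw [ha1]; simp [htu]
    have hta : t ∉ a := fun h => htw0 (Finset.mem_singleton.mp (hasub h))
    have hb := hbud t htU
    have hge := hcnt t hta1 hta
    rcases hs0 with h | h | h
    · have htb := hsubset b1 w0 t h htu htw0
      simp only [if_neg htb] at hb; omega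
    · have htb := hsubset b2 w0 t h htu htw0
      simp only [if_neg htb] at hb; omega
    · have htb := hsubset b3 w0 t h htu htw0
      simp only [if_neg htb] at hb; omega
  obtain ⟨w2, hw2a, hw2s⟩ := pick a2 ha2n ha2U
    (fun t h1 h2 => by simp only [if_neg h1, if_neg h2]; omega)
  obtain ⟨w3, hw3a, hw3s⟩ := pick a3 ha3n ha3U
    (fun t h1 h2 => by simp only [if_neg h1, if_neg h2]; split_ifs <;> omega)
  have final : ∀ z : α, ¬ sngl u b1 b2 b3 z → z ∈ a2 → z ∈ a3 →
      ∃ W : Finset α, ((a1 ∩ W).Nonempty ∧ (a2 ∩ W).Nonempty ∧ (a3 ∩ W).Nonempty) ∧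
        (¬ b1 ⊆ W ∧ ¬ b2 ⊆ W ∧ ¬ b3 ⊆ W) := by
    intro z hz hz2 hz3
    have hcheck : ∀ b : Finset α, (b.erase u).Nonempty →
        (b.erase u = {z} → sngl u b1 b2 b3 z) → ¬ b ⊆ ({u, z} : Finset α) := by
      intro b hne hsg hsub
      have hsub' : b.erase u ⊆ {z} := by
        intro t ht
        obtain ⟨htu, htb⟩ := Finset.mem_erase.mp ht
        have := hsub htb
        simp only [Finset.mem_insert, Finset.mem_singleton] at this ⊢
        tauto
      rcases Finset.subset_singleton_iff.mp hsub' with h | h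
      · rw [h] at hne; exact Finset.not_nonempty_empty hne
      · exact hz (hsg h)
    exact ⟨{u, z}, ⟨⟨u, Finset.mem_inter.mpr ⟨by rw [ha1]; simp, by simp⟩⟩,
      ⟨z, Finset.mem_inter.mpr ⟨hz2, by simp⟩⟩, ⟨z, Finset.mem_inter.mpr ⟨hz3, by simp⟩⟩⟩,
      hcheck b1 hc1 (fun h => Or.inl h), hcheck b2 hc2 (fun h => Or.inr (Or.inl h)),
      hcheck b3 hc3 (fun h => Or.inr (Or.inr h))⟩
  by_cases hWb : b1 ⊆ ({u, w2, w3} : Finset α) ∨ b2 ⊆ ({u, w2, w3} : Finset α) ∨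
      b3 ⊆ ({u, w2, w3} : Finset α)
  · have core : ∀ b : Finset α, u ∈ b → (b.erase u).Nonempty →
        b ⊆ ({u, w2, w3} : Finset α) →
        (∀ γ, b.erase u = {γ} → sngl u b1 b2 b3 γ) →
        (∀ t, t ∈ U → t ∉ a1 → t ∉ b → t ∈ a2 ∧ t ∈ a3) →
        ∃ W : Finset α, ((a1 ∩ W).Nonempty ∧ (a2 ∩ W).Nonempty ∧ (a3 ∩ W).Nonempty) ∧
          (¬ b1 ⊆ W ∧ ¬ b2 ⊆ W ∧ ¬ b3 ⊆ W) := by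
      intro b hub hbne hbsub hsg hforce
      have hcsub : b.erase u ⊆ {w2, w3} := by
        intro t ht
        obtain ⟨htu, htb⟩ := Finset.mem_erase.mp ht
        have := hbsub htb
        simp only [Finset.mem_insert, Finset.mem_singleton] at this ⊢
        tauto
      have hne23 : w2 ≠ w3 := by
        rintro rfl
        have hcsub' : b.erase u ⊆ {w2} := by
          intro t ht
          have := hcsub ht
          simp only [Finset.mem_insert, Finset.mem_singleton] at this ⊢
          tauto
        rcases Finset.subset_singleton_iff.mp hcsub' with h | h
        · rw [h] at hbne; exact absurd hbne Finset.not_nonempty_empty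
        · exact absurd (hsg _ h) hw2s
      have hw2c : w2 ∈ b.erase u := by
        by_contra hcon
        have hcsub' : b.erase u ⊆ {w3} := by
          intro t ht
          have := hcsub ht
          simp only [Finset.mem_insert, Finset.mem_singleton] at this ⊢
          rcases this with rfl | h
          · exact absurd ht hcon
          · exact h
        rcases Finset.subset_singleton_iff.mp hcsub' with h | h
        · rw [h] at hbne; exact absurd hbne Finset.not_nonempty_empty
        · exact absurd (hsg _ h) hw3s
      have hw3c : w3 ∈ b.erase u := by
        by_contra hcon
        have hcsub' : b.erase u ⊆ {w2} := by
          intro t ht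
          have := hcsub ht
          simp only [Finset.mem_insert, Finset.mem_singleton] at this ⊢
          rcases this with h | rfl
          · exact h
          · exact absurd ht hcon
        rcases Finset.subset_singleton_iff.mp hcsub' with h | h
        · rw [h] at hbne; exact absurd hbne Finset.not_nonempty_empty
        · exact absurd (hsg _ h) hw2s
      have hw2u : w2 ≠ u := (Finset.mem_erase.mp hw2c).1
      have hw3u : w3 ≠ u := (Finset.mem_erase.mp hw3c).1
      obtain ⟨t0, ht0U, ht0s⟩ := exists_in_out (lt_of_le_of_lt (card_le3 u w2 w3) (show 3 < U.card by omega))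
      simp only [Finset.mem_insert, Finset.mem_singleton] at ht0s
      push_neg at ht0s
      obtain ⟨ht0u, ht0w2, ht0w3⟩ := ht0s
      have ht0a1 : t0 ∉ a1 := by rw [ha1]; simp [ht0u]
      have ht0b : t0 ∉ b := by
        intro h
        have := hbsub h
        simp only [Finset.mem_insert, Finset.mem_singleton] at this
        tauto
      by_cases ht0sngl : sngl u b1 b2 b3 t0
      · have hw2U : w2 ∈ U := ha2U hw2a
        have hw2a1 : w2 ∉ a1 := by rw [ha1]; simp [hw2u]
        have hb := hbud w2 hw2U
        rcases ht0sngl with h | h | h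
        · have hw2b : w2 ∉ b1 := hsubset b1 t0 w2 h hw2u (fun hh => ht0w2 hh.symm)
          have hw2a3 : w2 ∈ a3 := by
            by_contra hcon
            simp only [if_neg hw2a1, if_neg hcon, if_neg hw2b] at hb; omega
          exact final w2 hw2s hw2a hw2a3
        · have hw2b : w2 ∉ b2 := hsubset b2 t0 w2 h hw2u (fun hh => ht0w2 hh.symm)
          have hw2a3 : w2 ∈ a3 := by
            by_contra hcon
            simp only [if_neg hw2a1, if_neg hcon, if_neg hw2b] at hb; omega
          exact final w2 hw2s hw2a hw2a3
        · have hw2b : w2 ∉ b3 := hsubset b3 t0 w2 h hw2u (fun hh => ht0w2 hh.symm)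
          have hw2a3 : w2 ∈ a3 := by
            by_contra hcon
            simp only [if_neg hw2a1, if_neg hcon, if_neg hw2b] at hb; omega
          exact final w2 hw2s hw2a hw2a3
      · obtain ⟨h2, h3⟩ := hforce t0 ht0U ht0a1 ht0b
        exact final t0 ht0sngl h2 h3
    have mkforce : ∀ (b : Finset α), (∀ t, t ∈ U → t ∉ a1 → t ∉ b →
        2 ≤ (if t ∈ a1 then 0 else 1) + (if t ∈ b then 0 else 1)) → True := fun _ _ => trivial
    rcases hWb with h | h | h
    · refine core b1 hu1 hc1 h (fun γ hh => Or.inl hh) (fun t htU h1 hb => ?_)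
      have hbt := hbud t htU
      constructor <;> by_contra hcon <;>
        simp only [if_neg h1, if_neg hcon, if_neg hb] at hbt <;> omega
    · refine core b2 hu2 hc2 h (fun γ hh => Or.inr (Or.inl hh)) (fun t htU h1 hb => ?_)
      have hbt := hbud t htU
      constructor <;> by_contra hcon <;>
        simp only [if_neg h1, if_neg hcon, if_neg hb] at hbt <;> omega
    · refine core b3 hu3 hc3 h (fun γ hh => Or.inr (Or.inr hh)) (fun t htU h1 hb => ?_)
      have hbt := hbud t htU
      constructor <;> by_contra hcon <;>
        simp only [if_neg h1, if_neg hcon, if_neg hb] at hbt <;> omega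
  · push_neg at hWb
    exact ⟨{u, w2, w3}, ⟨⟨u, Finset.mem_inter.mpr ⟨by rw [ha1]; simp, by simp⟩⟩,
      ⟨w2, Finset.mem_inter.mpr ⟨hw2a, by simp⟩⟩, ⟨w3, Finset.mem_inter.mpr ⟨hw3a, by simp⟩⟩⟩,
      hWb.1, hWb.2.1, hWb.2.2⟩

end TwoA

section TwoAQ
variable {α : Type*} [DecidableEq α]

/-- P glue. -/
theorem twoA_P (U a1 a2 a3 b1 b2 b3 : Finset α)
    (hU : 4 ≤ U.card)
    (ha1U : a1 ⊆ U) (ha2U : a2 ⊆ U) (ha3U : a3 ⊆ U)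
    (hb1U : b1 ⊆ U) (hb2U : b2 ⊆ U) (hb3U : b3 ⊆ U)
    (ha1n : a1.Nonempty) (ha2n : a2.Nonempty) (ha3n : a3.Nonempty)
    (hbud : ∀ u ∈ U, (if u ∈ a1 then 0 else 1) + (if u ∈ a2 then 0 else 1) +
      (if u ∈ a3 then 0 else 1) + (if u ∈ b1 then 0 else 1) + (if u ∈ b2 then 0 else 1) +
      (if u ∈ b3 then 0 else 1) ≤ 2)
    (htri : ∀ u : α, (a1 = {u} ∨ a2 = {u} ∨ a3 = {u}) →
      (b1 = {u} ∨ b2 = {u} ∨ b3 = {u}) → False)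
    (u : α) (hu1 : u ∈ b1) (hu2 : u ∈ b2) (hu3 : u ∈ b3) :
    ∃ W : Finset α, ((a1 ∩ W).Nonempty ∧ (a2 ∩ W).Nonempty ∧ (a3 ∩ W).Nonempty) ∧
      (¬ b1 ⊆ W ∧ ¬ b2 ⊆ W ∧ ¬ b3 ⊆ W) := by
  by_cases h1 : a1 = {u}
  · exact twoA_P2 U a1 a2 a3 b1 b2 b3 hU ha2U ha3U hb1U hb2U hb3U ha2n ha3n hbud htri
      u hu1 hu2 hu3 h1
  by_cases h2 : a2 = {u}
  · obtain ⟨W, ⟨k1, k2, k3⟩, hb⟩ := twoA_P2 U a2 a1 a3 b1 b2 b3 hU ha1U ha3U hb1U hb2U hb3U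
      ha1n ha3n (fun t ht => by have := hbud t ht; omega)
      (fun t hA hB => htri t (by tauto) hB) u hu1 hu2 hu3 h2
    exact ⟨W, ⟨k2, k1, k3⟩, hb⟩
  by_cases h3 : a3 = {u}
  · obtain ⟨W, ⟨k1, k2, k3⟩, hb⟩ := twoA_P2 U a3 a2 a1 b1 b2 b3 hU ha2U ha1U hb1U hb2U hb3U
      ha2n ha1n (fun t ht => by have := hbud t ht; omega)
      (fun t hA hB => htri t (by tauto) hB) u hu1 hu2 hu3 h3
    exact ⟨W, ⟨k3, k2, k1⟩, hb⟩
  · have pickne : ∀ a : Finset α, a.Nonempty → a ≠ {u} → ∃ w ∈ a, w ≠ u := by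
      intro a han hane
      by_contra h
      push_neg at h
      apply hane
      apply Finset.eq_singleton_iff_unique_mem.mpr
      obtain ⟨w, hw⟩ := han
      have hwu := h w hw
      exact ⟨hwu ▸ hw, h⟩
    obtain ⟨w1, hw1, hw1u⟩ := pickne a1 ha1n h1
    obtain ⟨w2, hw2, hw2u⟩ := pickne a2 ha2n h2
    obtain ⟨w3, hw3, hw3u⟩ := pickne a3 ha3n h3
    refine ⟨{w1, w2, w3}, ⟨⟨w1, Finset.mem_inter.mpr ⟨hw1, by simp⟩⟩,
      ⟨w2, Finset.mem_inter.mpr ⟨hw2, by simp⟩⟩,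
      ⟨w3, Finset.mem_inter.mpr ⟨hw3, by simp⟩⟩⟩, ?_, ?_, ?_⟩ <;> intro hsub
    · have := hsub hu1
      simp only [Finset.mem_insert, Finset.mem_singleton] at this
      rcases this with h | h | h
      exacts [hw1u h.symm, hw2u h.symm, hw3u h.symm]
    · have := hsub hu2
      simp only [Finset.mem_insert, Finset.mem_singleton] at this
      rcases this with h | h | h
      exacts [hw1u h.symm, hw2u h.symm, hw3u h.symm]
    · have := hsub hu3
      simp only [Finset.mem_insert, Finset.mem_singleton] at this
      rcases this with h | h | h
      exacts [hw1u h.symm, hw2u h.symm, hw3u h.symm]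

/-- Q case, monochromatic subcase: all of U minus u,u' misses a1, and u ∈ a1. -/
theorem twoA_Qmono (U a1 a2 a3 b1 b2 b3 : Finset α)
    (hU : 4 ≤ U.card)
    (ha1U : a1 ⊆ U) (hb1n : b1.Nonempty) (ha1n : a1.Nonempty)
    (htri : ∀ u : α, (a1 = {u} ∨ a2 = {u} ∨ a3 = {u}) →
      (b1 = {u} ∨ b2 = {u} ∨ b3 = {u}) → False)
    (typeA : ∀ v ∈ U, (v ∉ a1 ∧ v ∈ a2 ∧ v ∈ a3) ∨ (v ∈ a1 ∧ v ∉ a2 ∧ v ∈ a3) ∨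
      (v ∈ a1 ∧ v ∈ a2 ∧ v ∉ a3))
    (typeB : ∀ v ∈ U, (v ∉ b1 ∧ v ∈ b2 ∧ v ∈ b3) ∨ (v ∈ b1 ∧ v ∉ b2 ∧ v ∈ b3) ∨
      (v ∈ b1 ∧ v ∈ b2 ∧ v ∉ b3))
    (hfail : ∀ W : Finset α, (a1 ∩ W).Nonempty → (a2 ∩ W).Nonempty → (a3 ∩ W).Nonempty →
      (b1 ⊆ W ∨ b2 ⊆ W ∨ b3 ⊆ W))
    (u u' : α) (huU : u ∈ U) (hu'U : u' ∈ U) (huu' : u ≠ u')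
    (hj0 : b1 ⊆ ({u, u'} : Finset α))
    (hmiss : ∀ k, k ∈ U → k ≠ u → k ≠ u' → k ∉ a1)
    (hua1 : u ∈ a1) : False := by
  obtain ⟨k, hkU, hks⟩ := exists_in_out (lt_of_le_of_lt (card_le2 u u') (show 2 < U.card by omega))
  simp only [Finset.mem_insert, Finset.mem_singleton] at hks
  push_neg at hks
  obtain ⟨hku, hku'⟩ := hks
  obtain ⟨k', hk'U, hk's⟩ := exists_in_out
    (lt_of_le_of_lt (card_le3 u u' k) (show 3 < U.card by omega))
  simp only [Finset.mem_insert, Finset.mem_singleton] at hk's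
  push_neg at hk's
  obtain ⟨hk'u, hk'u', hk'k⟩ := hk's
  have hk1 := hmiss k hkU hku hku'
  have hk2 : k ∈ a2 ∧ k ∈ a3 := by
    rcases typeA k hkU with ⟨_, h2, h3⟩ | ⟨h1, _, _⟩ | ⟨h1, _, _⟩
    exacts [⟨h2, h3⟩, absurd h1 hk1, absurd h1 hk1]
  have hk'b1 : k' ∉ b1 := by
    intro hh
    have := hj0 hh
    simp only [Finset.mem_insert, Finset.mem_singleton] at this
    tauto
  have killB : ∀ v, v ∈ U → v ∉ b1 → v ∈ b2 ∧ v ∈ b3 := by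
    intro v hv h1
    rcases typeB v hv with ⟨_, h2, h3⟩ | ⟨hb, _, _⟩ | ⟨hb, _, _⟩
    exacts [⟨h2, h3⟩, absurd hb h1, absurd hb h1]
  have hb1u : b1 = {u} := by
    rcases hfail {u, k} ⟨u, Finset.mem_inter.mpr ⟨hua1, by simp⟩⟩
        ⟨k, Finset.mem_inter.mpr ⟨hk2.1, by simp⟩⟩
        ⟨k, Finset.mem_inter.mpr ⟨hk2.2, by simp⟩⟩ with h | h | h
    · apply Finset.eq_singleton_iff_unique_mem.mpr
      have huniq : ∀ s ∈ b1, s = u := by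
        intro s hs
        have e1 := hj0 hs
        have e2 := h hs
        simp only [Finset.mem_insert, Finset.mem_singleton] at e1 e2
        rcases e1 with rfl | rfl
        · rfl
        · rcases e2 with h' | h'
          · exact absurd h' (Ne.symm huu')
          · exact absurd h' (Ne.symm hku')
      obtain ⟨t, ht⟩ := hb1n
      have := huniq t ht
      exact ⟨this ▸ ht, huniq⟩
    · exfalso
      have hm := (killB k' hk'U hk'b1).1
      have := h hm
      simp only [Finset.mem_insert, Finset.mem_singleton] at this
      tauto
    · exfalso
      have hm := (killB k' hk'U hk'b1).2
      have := h hm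
      simp only [Finset.mem_insert, Finset.mem_singleton] at this
      tauto
  by_cases hu'a1 : u' ∈ a1
  · rcases hfail {u', k} ⟨u', Finset.mem_inter.mpr ⟨hu'a1, by simp⟩⟩
        ⟨k, Finset.mem_inter.mpr ⟨hk2.1, by simp⟩⟩
        ⟨k, Finset.mem_inter.mpr ⟨hk2.2, by simp⟩⟩ with h | h | h
    · have hub1 : u ∈ b1 := by rw [hb1u]; simp
      have := h hub1
      simp only [Finset.mem_insert, Finset.mem_singleton] at this
      tauto
    · have hm := (killB k' hk'U hk'b1).1
      have := h hm
      simp only [Finset.mem_insert, Finset.mem_singleton] at this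
      tauto
    · have hm := (killB k' hk'U hk'b1).2
      have := h hm
      simp only [Finset.mem_insert, Finset.mem_singleton] at this
      tauto
  · have ha1eq : a1 = {u} := by
      apply Finset.eq_singleton_iff_unique_mem.mpr
      refine ⟨hua1, fun t ht => ?_⟩
      have htU := ha1U ht
      by_contra htu
      by_cases htu' : t = u'
      · rw [htu'] at ht; exact hu'a1 ht
      · exact hmiss t htU htu htu' ht
    exact htri u (Or.inl ha1eq) (Or.inl hb1u)

/-- Q case core, after fixing the pair (u,u') and knowing b1 ⊆ {u,u'}. -/
theorem twoA_Qcore (U a1 a2 a3 b1 b2 b3 : Finset α)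
    (hU : 4 ≤ U.card)
    (ha1U : a1 ⊆ U) (ha2U : a2 ⊆ U) (ha3U : a3 ⊆ U)
    (hb1n : b1.Nonempty) (ha1n : a1.Nonempty) (ha2n : a2.Nonempty) (ha3n : a3.Nonempty)
    (htri : ∀ u : α, (a1 = {u} ∨ a2 = {u} ∨ a3 = {u}) →
      (b1 = {u} ∨ b2 = {u} ∨ b3 = {u}) → False)
    (typeA : ∀ v ∈ U, (v ∉ a1 ∧ v ∈ a2 ∧ v ∈ a3) ∨ (v ∈ a1 ∧ v ∉ a2 ∧ v ∈ a3) ∨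
      (v ∈ a1 ∧ v ∈ a2 ∧ v ∉ a3))
    (typeB : ∀ v ∈ U, (v ∉ b1 ∧ v ∈ b2 ∧ v ∈ b3) ∨ (v ∈ b1 ∧ v ∉ b2 ∧ v ∈ b3) ∨
      (v ∈ b1 ∧ v ∈ b2 ∧ v ∉ b3))
    (hfail : ∀ W : Finset α, (a1 ∩ W).Nonempty → (a2 ∩ W).Nonempty → (a3 ∩ W).Nonempty →
      (b1 ⊆ W ∨ b2 ⊆ W ∨ b3 ⊆ W))
    (u u' : α) (huU : u ∈ U) (hu'U : u' ∈ U) (huu' : u ≠ u')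
    (hj0 : b1 ⊆ ({u, u'} : Finset α)) : False := by
  have step3 : ∀ v, v ∈ U → v ≠ u → v ≠ u' → v ∉ b1 := by
    intro v hv h1 h2 hvb
    have := hj0 hvb
    simp only [Finset.mem_insert, Finset.mem_singleton] at this
    tauto
  have killB : ∀ v, v ∈ U → v ∉ b1 → v ∈ b2 ∧ v ∈ b3 := by
    intro v hv h1
    rcases typeB v hv with ⟨_, h2, h3⟩ | ⟨hb, _, _⟩ | ⟨hb, _, _⟩
    exacts [⟨h2, h3⟩, absurd hb h1, absurd hb h1]
  have covOr : ∀ z z' : α, ((z ∈ a1 ∨ z' ∈ a1) ∧ (z ∈ a2 ∨ z' ∈ a2) ∧ (z ∈ a3 ∨ z' ∈ a3)) ∨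
      ((z ∉ a1 ∧ z' ∉ a1) ∨ (z ∉ a2 ∧ z' ∉ a2) ∨ (z ∉ a3 ∧ z' ∉ a3)) := fun z z' => by tauto
  have mkhit : ∀ (a W : Finset α) (z z' : α), z ∈ W → z' ∈ W → (z ∈ a ∨ z' ∈ a) →
      (a ∩ W).Nonempty := by
    intro a W z z' hz hz' h
    rcases h with h | h
    exacts [⟨z, Finset.mem_inter.mpr ⟨h, hz⟩⟩, ⟨z', Finset.mem_inter.mpr ⟨h, hz'⟩⟩]
  by_cases hpq : ∃ p q : α, p ∈ U ∧ q ∈ U ∧ p ≠ u ∧ p ≠ u' ∧ q ≠ u ∧ q ≠ u' ∧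
      (p ∈ a1 ∨ q ∈ a1) ∧ (p ∈ a2 ∨ q ∈ a2) ∧ (p ∈ a3 ∨ q ∈ a3)
  · obtain ⟨p, q, hpU, hqU, hpu, hpu', hqu, hqu', hc1, hc2, hc3⟩ := hpq
    have hpqne : p ≠ q := by
      rintro rfl
      rcases typeA p hpU with ⟨h, _, _⟩ | ⟨_, h, _⟩ | ⟨_, _, h⟩ <;> tauto
    have sub23 : ∀ s t : Finset α,
        (∀ v, v ∈ U → v ∉ b1 → v ∈ s ∧ v ∈ t) →
        (∀ v, v ∈ U → v ∉ s → v ∈ b1 ∧ v ∈ t) →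
        (∀ W : Finset α, (a1 ∩ W).Nonempty → (a2 ∩ W).Nonempty → (a3 ∩ W).Nonempty →
          (b1 ⊆ W ∨ s ⊆ W ∨ t ⊆ W)) →
        s ⊆ ({p, q} : Finset α) → False := by
      intro s t trib1 tris hfailS hsubpq
      by_cases hout : ∃ v, v ∈ U ∧ v ≠ u ∧ v ≠ u' ∧ v ≠ p ∧ v ≠ q
      · obtain ⟨v, hvU, hv1, hv2, hv3, hv4⟩ := hout
        have hvb1 : v ∉ b1 := step3 v hvU hv1 hv2
        have hvs : v ∈ s := (trib1 v hvU hvb1).1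
        have := hsubpq hvs
        simp only [Finset.mem_insert, Finset.mem_singleton] at this
        tauto
      · have hpb1 : p ∉ b1 := step3 p hpU hpu hpu'
        have hqb1 : q ∉ b1 := step3 q hqU hqu hqu'
        have hus : u ∉ s := by
          intro hh
          have := hsubpq hh
          simp only [Finset.mem_insert, Finset.mem_singleton] at this
          rcases this with h' | h'
          exacts [hpu h'.symm, hqu h'.symm]
        have hu's : u' ∉ s := by
          intro hh
          have := hsubpq hh
          simp only [Finset.mem_insert, Finset.mem_singleton] at this
          rcases this with h' | h'
          exacts [hpu' h'.symm, hqu' h'.symm]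
        have hub1t := tris u huU hus
        have hu'b1t := tris u' hu'U hu's
        obtain ⟨r, hrU, hru', hrneu, hrpq, covr1, covr2, covr3⟩ :
            ∃ r, r ∈ U ∧ r ≠ u' ∧ r ≠ u ∧ (r = p ∨ r = q) ∧
            (u ∈ a1 ∨ r ∈ a1) ∧ (u ∈ a2 ∨ r ∈ a2) ∧ (u ∈ a3 ∨ r ∈ a3) := by
          rcases covOr u p with hcov | hbad1
          · exact ⟨p, hpU, hpu', hpu, Or.inl rfl, hcov.1, hcov.2.1, hcov.2.2⟩
          rcases covOr u q with hcov | hbad2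
          · exact ⟨q, hqU, hqu', hqu, Or.inr rfl, hcov.1, hcov.2.1, hcov.2.2⟩
          exfalso
          rcases typeA u huU with ⟨m1, m2, m3⟩ | ⟨m1, m2, m3⟩ | ⟨m1, m2, m3⟩ <;>
            rcases hbad1 with ⟨e1, e2⟩ | ⟨e1, e2⟩ | ⟨e1, e2⟩ <;>
            rcases hbad2 with ⟨f1, f2⟩ | ⟨f1, f2⟩ | ⟨f1, f2⟩ <;> tauto
        rcases hfailS {u, r} (mkhit a1 _ u r (by simp) (by simp) covr1)
          (mkhit a2 _ u r (by simp) (by simp) covr2)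
          (mkhit a3 _ u r (by simp) (by simp) covr3) with h | h | h
        · have := h hu'b1t.1
          simp only [Finset.mem_insert, Finset.mem_singleton] at this
          rcases this with h' | h'
          exacts [huu' h'.symm, hru' h'.symm]
        · have hp' := h (trib1 p hpU hpb1).1
          have hq' := h (trib1 q hqU hqb1).1
          simp only [Finset.mem_insert, Finset.mem_singleton] at hp' hq'
          rcases hp' with h' | h'
          · exact hpu h'
          · rcases hq' with h'' | h''
            · exact hqu h''
            · exact hpqne (h'.trans h''.symm)
        · have := h hu'b1t.2
          simp only [Finset.mem_insert, Finset.mem_singleton] at this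
          rcases this with h' | h'
          exacts [huu' h'.symm, hru' h'.symm]
    rcases hfail {p, q} (mkhit a1 _ p q (by simp) (by simp) hc1)
      (mkhit a2 _ p q (by simp) (by simp) hc2)
      (mkhit a3 _ p q (by simp) (by simp) hc3) with h | h | h
    · obtain ⟨tb, htb⟩ := hb1n
      have e1 := hj0 htb
      have e2 := h htb
      simp only [Finset.mem_insert, Finset.mem_singleton] at e1 e2
      rcases e1 with rfl | rfl <;> rcases e2 with h' | h'
      exacts [hpu h'.symm, hqu h'.symm, hpu' h'.symm, hqu' h'.symm]
    · exact sub23 b2 b3 (fun v hv h1 => killB v hv h1)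
        (fun v hv h2 => by rcases typeB v hv with c | c | c <;> tauto) hfail h
    · exact sub23 b3 b2 (fun v hv h1 => ⟨(killB v hv h1).2, (killB v hv h1).1⟩)
        (fun v hv h2 => by rcases typeB v hv with c | c | c <;> tauto)
        (fun W w1 w2 w3 => by rcases hfail W w1 w2 w3 with h' | h' | h' <;> tauto) h
  · obtain ⟨k0, hk0U, hk0s⟩ := exists_in_out
      (lt_of_le_of_lt (card_le2 u u') (show 2 < U.card by omega))
    simp only [Finset.mem_insert, Finset.mem_singleton] at hk0s
    push_neg at hk0s
    obtain ⟨hk0u, hk0u'⟩ := hk0s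
    have honeOf : ∀ a : Finset α, a ⊆ U → a.Nonempty →
        (∀ k, k ∈ U → k ≠ u → k ≠ u' → k ∉ a) → (u ∈ a ∨ u' ∈ a) := by
      intro a haU han hm
      by_contra hcon
      push_neg at hcon
      obtain ⟨t, ht⟩ := han
      have htU := haU ht
      by_cases e1 : t = u
      · rw [e1] at ht; exact hcon.1 ht
      by_cases e2 : t = u'
      · rw [e2] at ht; exact hcon.2 ht
      exact hm t htU e1 e2 ht
    rcases typeA k0 hk0U with ⟨m1, m2, m3⟩ | ⟨m1, m2, m3⟩ | ⟨m1, m2, m3⟩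
    · have hmiss : ∀ k, k ∈ U → k ≠ u → k ≠ u' → k ∉ a1 := by
        intro k hkU hku hku'
        rcases covOr k0 k with hcov | hbad
        · exact absurd ⟨k0, k, hk0U, hkU, hk0u, hk0u', hku, hku',
            hcov.1, hcov.2.1, hcov.2.2⟩ hpq
        · rcases hbad with ⟨e1, e2⟩ | ⟨e1, e2⟩ | ⟨e1, e2⟩
          exacts [e2, absurd m2 e1, absurd m3 e1]
      rcases honeOf a1 ha1U ha1n hmiss with h | h
      · exact twoA_Qmono U a1 a2 a3 b1 b2 b3 hU ha1U hb1n ha1n htri typeA typeB hfail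
          u u' huU hu'U huu' hj0 hmiss h
      · exact twoA_Qmono U a1 a2 a3 b1 b2 b3 hU ha1U hb1n ha1n htri typeA typeB hfail
          u' u hu'U huU (Ne.symm huu') (by rwa [Finset.pair_comm])
          (fun k hk e1 e2 => hmiss k hk e2 e1) h
    · have hmiss : ∀ k, k ∈ U → k ≠ u → k ≠ u' → k ∉ a2 := by
        intro k hkU hku hku'
        rcases covOr k0 k with hcov | hbad
        · exact absurd ⟨k0, k, hk0U, hkU, hk0u, hk0u', hku, hku',
            hcov.1, hcov.2.1, hcov.2.2⟩ hpq
        · rcases hbad with ⟨e1, e2⟩ | ⟨e1, e2⟩ | ⟨e1, e2⟩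
          exacts [absurd m1 e1, e2, absurd m3 e1]
      have typeA' : ∀ v ∈ U, (v ∉ a2 ∧ v ∈ a1 ∧ v ∈ a3) ∨ (v ∈ a2 ∧ v ∉ a1 ∧ v ∈ a3) ∨
          (v ∈ a2 ∧ v ∈ a1 ∧ v ∉ a3) := by
        intro v hv; rcases typeA v hv with c | c | c <;> tauto
      have hfail' : ∀ W : Finset α, (a2 ∩ W).Nonempty → (a1 ∩ W).Nonempty →
          (a3 ∩ W).Nonempty → (b1 ⊆ W ∨ b2 ⊆ W ∨ b3 ⊆ W) := fun W w1 w2 w3 =>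
        hfail W w2 w1 w3
      have htri' : ∀ t : α, (a2 = {t} ∨ a1 = {t} ∨ a3 = {t}) →
          (b1 = {t} ∨ b2 = {t} ∨ b3 = {t}) → False := fun t hA hB => htri t (by tauto) hB
      rcases honeOf a2 ha2U ha2n hmiss with h | h
      · exact twoA_Qmono U a2 a1 a3 b1 b2 b3 hU ha2U hb1n ha2n htri' typeA' typeB hfail'
          u u' huU hu'U huu' hj0 hmiss h
      · exact twoA_Qmono U a2 a1 a3 b1 b2 b3 hU ha2U hb1n ha2n htri' typeA' typeB hfail'
          u' u hu'U huU (Ne.symm huu') (by rwa [Finset.pair_comm])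
          (fun k hk e1 e2 => hmiss k hk e2 e1) h
    · have hmiss : ∀ k, k ∈ U → k ≠ u → k ≠ u' → k ∉ a3 := by
        intro k hkU hku hku'
        rcases covOr k0 k with hcov | hbad
        · exact absurd ⟨k0, k, hk0U, hkU, hk0u, hk0u', hku, hku',
            hcov.1, hcov.2.1, hcov.2.2⟩ hpq
        · rcases hbad with ⟨e1, e2⟩ | ⟨e1, e2⟩ | ⟨e1, e2⟩
          exacts [absurd m1 e1, absurd m2 e1, e2]
      have typeA' : ∀ v ∈ U, (v ∉ a3 ∧ v ∈ a2 ∧ v ∈ a1) ∨ (v ∈ a3 ∧ v ∉ a2 ∧ v ∈ a1) ∨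
          (v ∈ a3 ∧ v ∈ a2 ∧ v ∉ a1) := by
        intro v hv; rcases typeA v hv with c | c | c <;> tauto
      have hfail' : ∀ W : Finset α, (a3 ∩ W).Nonempty → (a2 ∩ W).Nonempty →
          (a1 ∩ W).Nonempty → (b1 ⊆ W ∨ b2 ⊆ W ∨ b3 ⊆ W) := fun W w1 w2 w3 =>
        hfail W w3 w2 w1
      have htri' : ∀ t : α, (a3 = {t} ∨ a2 = {t} ∨ a1 = {t}) →
          (b1 = {t} ∨ b2 = {t} ∨ b3 = {t}) → False := fun t hA hB => htri t (by tauto) hB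
      rcases honeOf a3 ha3U ha3n hmiss with h | h
      · exact twoA_Qmono U a3 a2 a1 b1 b2 b3 hU ha3U hb1n ha3n htri' typeA' typeB hfail'
          u u' huU hu'U huu' hj0 hmiss h
      · exact twoA_Qmono U a3 a2 a1 b1 b2 b3 hU ha3U hb1n ha3n htri' typeA' typeB hfail'
          u' u hu'U huU (Ne.symm huu') (by rwa [Finset.pair_comm])
          (fun k hk e1 e2 => hmiss k hk e2 e1) h

end TwoAQ

section TwoATop
variable {α : Type*} [DecidableEq α]

theorem twoA_Q (U a1 a2 a3 b1 b2 b3 : Finset α)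
    (hU : 4 ≤ U.card)
    (ha1U : a1 ⊆ U) (ha2U : a2 ⊆ U) (ha3U : a3 ⊆ U)
    (hb1U : b1 ⊆ U) (hb2U : b2 ⊆ U) (hb3U : b3 ⊆ U)
    (ha1n : a1.Nonempty) (ha2n : a2.Nonempty) (ha3n : a3.Nonempty)
    (hb1n : b1.Nonempty) (hb2n : b2.Nonempty) (hb3n : b3.Nonempty)
    (hbud : ∀ u ∈ U, (if u ∈ a1 then 0 else 1) + (if u ∈ a2 then 0 else 1) +
      (if u ∈ a3 then 0 else 1) + (if u ∈ b1 then 0 else 1) + (if u ∈ b2 then 0 else 1) +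
      (if u ∈ b3 then 0 else 1) ≤ 2)
    (htri : ∀ u : α, (a1 = {u} ∨ a2 = {u} ∨ a3 = {u}) →
      (b1 = {u} ∨ b2 = {u} ∨ b3 = {u}) → False)
    (hna : ∀ u : α, u ∉ a1 ∨ u ∉ a2 ∨ u ∉ a3)
    (hnb : ∀ u : α, u ∉ b1 ∨ u ∉ b2 ∨ u ∉ b3) :
    ∃ W : Finset α, ((a1 ∩ W).Nonempty ∧ (a2 ∩ W).Nonempty ∧ (a3 ∩ W).Nonempty) ∧
      (¬ b1 ⊆ W ∧ ¬ b2 ⊆ W ∧ ¬ b3 ⊆ W) := by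
  by_contra hfail0
  have hfail : ∀ W : Finset α, (a1 ∩ W).Nonempty → (a2 ∩ W).Nonempty → (a3 ∩ W).Nonempty →
      (b1 ⊆ W ∨ b2 ⊆ W ∨ b3 ⊆ W) := by
    intro W w1 w2 w3
    by_contra hc
    push_neg at hc
    exact hfail0 ⟨W, ⟨w1, w2, w3⟩, hc⟩
  have typeA : ∀ v ∈ U, (v ∉ a1 ∧ v ∈ a2 ∧ v ∈ a3) ∨ (v ∈ a1 ∧ v ∉ a2 ∧ v ∈ a3) ∨
      (v ∈ a1 ∧ v ∈ a2 ∧ v ∉ a3) := by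
    intro v hv
    have hb := hbud v hv
    rcases hna v with h | h | h
    · left
      refine ⟨h, ?_, ?_⟩ <;> by_contra hc <;> rcases hnb v with h' | h' | h' <;>
        simp only [if_neg h, if_neg hc, if_neg h'] at hb <;> omega
    · right; left
      refine ⟨?_, h, ?_⟩ <;> by_contra hc <;> rcases hnb v with h' | h' | h' <;>
        simp only [if_neg h, if_neg hc, if_neg h'] at hb <;> omega
    · right; right
      refine ⟨?_, ?_, h⟩ <;> by_contra hc <;> rcases hnb v with h' | h' | h' <;>
        simp only [if_neg h, if_neg hc, if_neg h'] at hb <;> omega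
  have typeB : ∀ v ∈ U, (v ∉ b1 ∧ v ∈ b2 ∧ v ∈ b3) ∨ (v ∈ b1 ∧ v ∉ b2 ∧ v ∈ b3) ∨
      (v ∈ b1 ∧ v ∈ b2 ∧ v ∉ b3) := by
    intro v hv
    have hb := hbud v hv
    rcases hnb v with h | h | h
    · left
      refine ⟨h, ?_, ?_⟩ <;> by_contra hc <;> rcases hna v with h' | h' | h' <;>
        simp only [if_neg h, if_neg hc, if_neg h'] at hb <;> omega
    · right; left
      refine ⟨?_, h, ?_⟩ <;> by_contra hc <;> rcases hna v with h' | h' | h' <;>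
        simp only [if_neg h, if_neg hc, if_neg h'] at hb <;> omega
    · right; right
      refine ⟨?_, ?_, h⟩ <;> by_contra hc <;> rcases hna v with h' | h' | h' <;>
        simp only [if_neg h, if_neg hc, if_neg h'] at hb <;> omega
  obtain ⟨v0, hv0U⟩ : ∃ v, v ∈ U := by
    obtain ⟨v, hv⟩ := Finset.card_pos.mp (show 0 < U.card by omega)
    exact ⟨v, hv⟩
  have mkhit : ∀ (a W : Finset α) (z z' : α), z ∈ W → z' ∈ W → (z ∈ a ∨ z' ∈ a) →
      (a ∩ W).Nonempty := by
    intro a W z z' hz hz' h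
    rcases h with h | h
    exacts [⟨z, Finset.mem_inter.mpr ⟨h, hz⟩⟩, ⟨z', Finset.mem_inter.mpr ⟨h, hz'⟩⟩]
  obtain ⟨u, u', huU, hu'U, huu', hcov1, hcov2, hcov3⟩ :
      ∃ u u', u ∈ U ∧ u' ∈ U ∧ u ≠ u' ∧ (u ∈ a1 ∨ u' ∈ a1) ∧ (u ∈ a2 ∨ u' ∈ a2) ∧
        (u ∈ a3 ∨ u' ∈ a3) := by
    rcases typeA v0 hv0U with ⟨h1, h2, h3⟩ | ⟨h1, h2, h3⟩ | ⟨h1, h2, h3⟩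
    · obtain ⟨w, hw⟩ := ha1n
      exact ⟨v0, w, hv0U, ha1U hw, fun he => h1 (by rw [he]; exact hw),
        Or.inr hw, Or.inl h2, Or.inl h3⟩
    · obtain ⟨w, hw⟩ := ha2n
      exact ⟨v0, w, hv0U, ha2U hw, fun he => h2 (by rw [he]; exact hw),
        Or.inl h1, Or.inr hw, Or.inl h3⟩
    · obtain ⟨w, hw⟩ := ha3n
      exact ⟨v0, w, hv0U, ha3U hw, fun he => h3 (by rw [he]; exact hw),
        Or.inl h1, Or.inl h2, Or.inr hw⟩
  rcases hfail {u, u'} (mkhit a1 _ u u' (by simp) (by simp) hcov1)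
    (mkhit a2 _ u u' (by simp) (by simp) hcov2)
    (mkhit a3 _ u u' (by simp) (by simp) hcov3) with hj0 | hj0 | hj0
  · exact twoA_Qcore U a1 a2 a3 b1 b2 b3 hU ha1U ha2U ha3U hb1n ha1n ha2n ha3n htri
      typeA typeB hfail u u' huU hu'U huu' hj0
  · exact twoA_Qcore U a1 a2 a3 b2 b1 b3 hU ha1U ha2U ha3U hb2n ha1n ha2n ha3n
      (fun t hA hB => htri t hA (by tauto))
      typeA (fun v hv => by rcases typeB v hv with c | c | c <;> tauto)
      (fun W w1 w2 w3 => by rcases hfail W w1 w2 w3 with h | h | h <;> tauto)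
      u u' huU hu'U huu' hj0
  · exact twoA_Qcore U a1 a2 a3 b3 b2 b1 hU ha1U ha2U ha3U hb3n ha1n ha2n ha3n
      (fun t hA hB => htri t hA (by tauto))
      typeA (fun v hv => by rcases typeB v hv with c | c | c <;> tauto)
      (fun W w1 w2 w3 => by rcases hfail W w1 w2 w3 with h | h | h <;> tauto)
      u u' huU hu'U huu' hj0

/-- The main abstract lemma. -/
theorem twoA (U a1 a2 a3 b1 b2 b3 : Finset α)
    (hU : 4 ≤ U.card)
    (ha1U : a1 ⊆ U) (ha2U : a2 ⊆ U) (ha3U : a3 ⊆ U)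
    (hb1U : b1 ⊆ U) (hb2U : b2 ⊆ U) (hb3U : b3 ⊆ U)
    (ha1n : a1.Nonempty) (ha2n : a2.Nonempty) (ha3n : a3.Nonempty)
    (hb1n : b1.Nonempty) (hb2n : b2.Nonempty) (hb3n : b3.Nonempty)
    (hbud : ∀ u ∈ U, (if u ∈ a1 then 0 else 1) + (if u ∈ a2 then 0 else 1) +
      (if u ∈ a3 then 0 else 1) + (if u ∈ b1 then 0 else 1) + (if u ∈ b2 then 0 else 1) +
      (if u ∈ b3 then 0 else 1) ≤ 2)
    (htri : ∀ u : α, (a1 = {u} ∨ a2 = {u} ∨ a3 = {u}) →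
      (b1 = {u} ∨ b2 = {u} ∨ b3 = {u}) → False) :
    ∃ W : Finset α, ((a1 ∩ W).Nonempty ∧ (a2 ∩ W).Nonempty ∧ (a3 ∩ W).Nonempty) ∧
      (¬ b1 ⊆ W ∧ ¬ b2 ⊆ W ∧ ¬ b3 ⊆ W) := by
  by_cases hPb : ∃ u, u ∈ b1 ∧ u ∈ b2 ∧ u ∈ b3
  · obtain ⟨u, h1, h2, h3⟩ := hPb
    exact twoA_P U a1 a2 a3 b1 b2 b3 hU ha1U ha2U ha3U hb1U hb2U hb3U ha1n ha2n ha3n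
      hbud htri u h1 h2 h3
  by_cases hPa : ∃ u, u ∈ a1 ∧ u ∈ a2 ∧ u ∈ a3
  · obtain ⟨u, h1, h2, h3⟩ := hPa
    obtain ⟨W', ⟨hW1, hW2, hW3⟩, hA1, hA2, hA3⟩ := twoA_P U b1 b2 b3 a1 a2 a3 hU
      hb1U hb2U hb3U ha1U ha2U ha3U hb1n hb2n hb3n
      (fun t ht => by have := hbud t ht; omega)
      (fun t hA hB => htri t hB hA) u h1 h2 h3
    refine ⟨U \ W', ⟨?_, ?_, ?_⟩, ?_, ?_, ?_⟩
    · obtain ⟨t, ht, htW⟩ := Finset.not_subset.mp hA1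
      exact ⟨t, Finset.mem_inter.mpr ⟨ht, Finset.mem_sdiff.mpr ⟨ha1U ht, htW⟩⟩⟩
    · obtain ⟨t, ht, htW⟩ := Finset.not_subset.mp hA2
      exact ⟨t, Finset.mem_inter.mpr ⟨ht, Finset.mem_sdiff.mpr ⟨ha2U ht, htW⟩⟩⟩
    · obtain ⟨t, ht, htW⟩ := Finset.not_subset.mp hA3
      exact ⟨t, Finset.mem_inter.mpr ⟨ht, Finset.mem_sdiff.mpr ⟨ha3U ht, htW⟩⟩⟩
    · obtain ⟨t, htm⟩ := hW1
      obtain ⟨htb, htW⟩ := Finset.mem_inter.mp htm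
      intro hsub
      exact (Finset.mem_sdiff.mp (hsub htb)).2 htW
    · obtain ⟨t, htm⟩ := hW2
      obtain ⟨htb, htW⟩ := Finset.mem_inter.mp htm
      intro hsub
      exact (Finset.mem_sdiff.mp (hsub htb)).2 htW
    · obtain ⟨t, htm⟩ := hW3
      obtain ⟨htb, htW⟩ := Finset.mem_inter.mp htm
      intro hsub
      exact (Finset.mem_sdiff.mp (hsub htb)).2 htW
  · have hna : ∀ u : α, u ∉ a1 ∨ u ∉ a2 ∨ u ∉ a3 := by
      intro v; by_contra hc; push_neg at hc; exact hPa ⟨v, hc⟩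
    have hnb : ∀ u : α, u ∉ b1 ∨ u ∉ b2 ∨ u ∉ b3 := by
      intro v; by_contra hc; push_neg at hc; exact hPb ⟨v, hc⟩
    exact twoA_Q U a1 a2 a3 b1 b2 b3 hU ha1U ha2U ha3U hb1U hb2U hb3U
      ha1n ha2n ha3n hb1n hb2n hb3n hbud htri hna hnb

end TwoATop

section CaseLemmas

variable {E : Multiset (Finset V)}

lemma card_filter3 (u : V) (A1 A2 A3 : Finset V) :
    Multiset.card (Multiset.filter (fun g => u ∉ g) {A1, A2, A3}) =
      (if u ∈ A1 then 0 else 1) + (if u ∈ A2 then 0 else 1) + (if u ∈ A3 then 0 else 1) := by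
  simp only [Multiset.insert_eq_cons, Multiset.filter_cons, Multiset.filter_singleton]
  split_ifs <;> simp_all

lemma ite_erase {u y : V} (huy : u ≠ y) (A : Finset V) :
    (if u ∈ A.erase y then (0:ℕ) else 1) = (if u ∈ A then 0 else 1) := by
  by_cases hA : u ∈ A
  · rw [if_pos hA, if_pos (Finset.mem_erase.mpr ⟨huy, hA⟩)]
  · rw [if_neg hA, if_neg (fun hc => hA (Finset.mem_erase.mp hc).2)]

/-- budget computation for the dominating-pair case -/
lemma budget_xy
    (hm : ∀ v : V, Multiset.card (miss E v) = 3)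
    (x y : V) (hd : ∀ g ∈ E, x ∉ g → y ∈ g)
    (hxyE : ({x, y} : Finset V) ∈ E)
    (u : V) (hux : u ≠ x) (huy : u ≠ y)
    (A1 A2 A3 B1 B2 B3 : Finset V)
    (hdA : miss E x = {A1, A2, A3}) (hdB : miss E y = {B1, B2, B3}) :
    (if u ∈ A1 then 0 else 1) + (if u ∈ A2 then 0 else 1) + (if u ∈ A3 then 0 else 1) +
    ((if u ∈ B1 then 0 else 1) + (if u ∈ B2 then 0 else 1) + (if u ∈ B3 then 0 else 1)) ≤ 2 := by
  classical
  have e1 : (miss E x).filter (fun g => u ∉ g) =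
      E.filter (fun g => u ∉ g ∧ x ∉ g) := by
    unfold miss
    rw [Multiset.filter_filter]
  have e2 : (miss E y).filter (fun g => u ∉ g) =
      E.filter (fun g => u ∉ g ∧ y ∉ g) := by
    unfold miss
    rw [Multiset.filter_filter]
  have e3 : ({({x, y} : Finset V)} : Multiset (Finset V)) ≤
      E.filter (fun g => u ∉ g ∧ (x ∈ g ∧ y ∈ g)) := by
    rw [Multiset.singleton_le]
    refine Multiset.mem_filter.mpr ⟨hxyE, ⟨?_, by simp, by simp⟩⟩
    simp [hux, huy]
  have hd0 : E.filter (fun g => (u ∉ g ∧ x ∉ g) ∧ (u ∉ g ∧ y ∉ g)) = 0 := by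
    rw [Multiset.filter_eq_nil]
    exact fun g hg hcon => hcon.2.2 (hd g hg hcon.1.2)
  have hd1 : E.filter (fun g =>
      ((fun g => u ∉ g ∧ x ∉ g) g ∨ (fun g => u ∉ g ∧ y ∉ g) g) ∧
      (u ∉ g ∧ (x ∈ g ∧ y ∈ g))) = 0 := by
    rw [Multiset.filter_eq_nil]
    intro g hg hcon
    simp only at hcon
    tauto
  have hsum : E.filter (fun g => u ∉ g ∧ x ∉ g) + E.filter (fun g => u ∉ g ∧ y ∉ g) +
      E.filter (fun g => u ∉ g ∧ (x ∈ g ∧ y ∈ g)) ≤ E.filter (fun g => u ∉ g) := by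
    rw [Multiset.filter_add_filter]
    rw [hd0, add_zero]
    rw [Multiset.filter_add_filter]
    rw [hd1, add_zero]
    apply Multiset.monotone_filter_right
    intro g hcon
    tauto
  have hle : (miss E x).filter (fun g => u ∉ g) + (miss E y).filter (fun g => u ∉ g) +
      ({({x, y} : Finset V)} : Multiset (Finset V)) ≤ miss E u := by
    rw [e1, e2]
    unfold miss
    calc E.filter (fun g => u ∉ g ∧ x ∉ g) + E.filter (fun g => u ∉ g ∧ y ∉ g) +
        ({({x, y} : Finset V)} : Multiset (Finset V)) ≤
        E.filter (fun g => u ∉ g ∧ x ∉ g) + E.filter (fun g => u ∉ g ∧ y ∉ g) +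
        E.filter (fun g => u ∉ g ∧ (x ∈ g ∧ y ∈ g)) := by
          exact add_le_add_right e3 _
      _ ≤ E.filter (fun g => u ∉ g) := hsum
  have hcard := Multiset.card_le_card hle
  rw [Multiset.card_add, Multiset.card_add, Multiset.card_singleton, hm u] at hcard
  rw [hdA] at hcard
  rw [hdB] at hcard
  rw [card_filter3, card_filter3] at hcard
  omega


theorem caseI_edge (hn : 6 ≤ Fintype.card V)
    (hm : ∀ v : V, Multiset.card (miss E v) = 3)
    (hE2 : ∀ e ∈ E, 2 ≤ e.card)
    (hTri : ¬ ∃ a b c : V, a ≠ b ∧ a ≠ c ∧ b ≠ c ∧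
      ({a, b} : Finset V) ∈ E ∧ ({a, c} : Finset V) ∈ E ∧ ({b, c} : Finset V) ∈ E)
    (x y : V) (hxy : x ≠ y) (hd : ∀ g ∈ E, x ∉ g → y ∈ g)
    (hxyE : ({x, y} : Finset V) ∈ E) :
    ∃ S : Finset V, (∀ g ∈ E, ∃ w ∈ g, w ∈ S) ∧ (∀ g ∈ E, ¬ g ⊆ S) := by
  classical
  obtain ⟨A1, A2, A3, hdA⟩ := Multiset.card_eq_three.mp (hm x)
  obtain ⟨B1, B2, B3, hdB⟩ := Multiset.card_eq_three.mp (hm y)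
  obtain ⟨hA1E, hxA1⟩ := decomp_mem1 hdA
  obtain ⟨hA2E, hxA2⟩ := decomp_mem2 hdA
  obtain ⟨hA3E, hxA3⟩ := decomp_mem3 hdA
  obtain ⟨hB1E, hyB1⟩ := decomp_mem1 hdB
  obtain ⟨hB2E, hyB2⟩ := decomp_mem2 hdB
  obtain ⟨hB3E, hyB3⟩ := decomp_mem3 hdB
  have hyA1 : y ∈ A1 := hd A1 hA1E hxA1
  have hyA2 : y ∈ A2 := hd A2 hA2E hxA2
  have hyA3 : y ∈ A3 := hd A3 hA3E hxA3
  have hxB : ∀ B : Finset V, B ∈ E → y ∉ B → x ∈ B := by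
    intro B hBE hyB
    by_contra hxBc
    rcases exact3 hdA B hBE hxBc with h | h | h <;> rw [h] at hyB
    exacts [hyB hyA1, hyB hyA2, hyB hyA3]
  have hxB1 : x ∈ B1 := hxB B1 hB1E hyB1
  have hxB2 : x ∈ B2 := hxB B2 hB2E hyB2
  have hxB3 : x ∈ B3 := hxB B3 hB3E hyB3
  set U : Finset V := Finset.univ \ {x, y} with hU
  have hUmem : ∀ u : V, u ∈ U ↔ (u ≠ x ∧ u ≠ y) := by
    intro u
    rw [hU]
    simp [Finset.mem_sdiff]
  have hUcard : 4 ≤ U.card := by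
    rw [hU, Finset.card_sdiff_of_subset (Finset.subset_univ _), Finset.card_univ]
    have h2 : ({x, y} : Finset V).card ≤ 2 := (Finset.card_insert_le _ _).trans (by simp)
    omega
  have haU : ∀ A : Finset V, x ∉ A → A.erase y ⊆ U := by
    intro A hxA t ht
    obtain ⟨hty, htA⟩ := Finset.mem_erase.mp ht
    exact (hUmem t).mpr ⟨fun h => hxA (h ▸ htA), hty⟩
  have hbU : ∀ B : Finset V, y ∉ B → B.erase x ⊆ U := by
    intro B hyB t ht
    obtain ⟨htx, htB⟩ := Finset.mem_erase.mp ht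
    exact (hUmem t).mpr ⟨htx, fun h => hyB (h ▸ htB)⟩
  have hane : ∀ A : Finset V, A ∈ E → y ∈ A → (A.erase y).Nonempty := by
    intro A hAE hyA
    rw [← Finset.card_pos, Finset.card_erase_of_mem hyA]
    have := hE2 A hAE
    omega
  have hbne : ∀ B : Finset V, B ∈ E → x ∈ B → (B.erase x).Nonempty := by
    intro B hBE hxBm
    rw [← Finset.card_pos, Finset.card_erase_of_mem hxBm]
    have := hE2 B hBE
    omega
  have hbud : ∀ u ∈ U, (if u ∈ A1.erase y then 0 else 1) + (if u ∈ A2.erase y then 0 else 1) +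
      (if u ∈ A3.erase y then 0 else 1) + (if u ∈ B1.erase x then 0 else 1) +
      (if u ∈ B2.erase x then 0 else 1) + (if u ∈ B3.erase x then 0 else 1) ≤ 2 := by
    intro u hu
    obtain ⟨hux, huy⟩ := (hUmem u).mp hu
    have h := budget_xy hm x y hd hxyE u hux huy A1 A2 A3 B1 B2 B3 hdA hdB
    rw [ite_erase huy A1, ite_erase huy A2, ite_erase huy A3,
        ite_erase hux B1, ite_erase hux B2, ite_erase hux B3]
    omega
  have htri : ∀ u : V, (A1.erase y = {u} ∨ A2.erase y = {u} ∨ A3.erase y = {u}) →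
      (B1.erase x = {u} ∨ B2.erase x = {u} ∨ B3.erase x = {u}) → False := by
    intro u hA hB
    have hgetA : ∃ A : Finset V, A ∈ E ∧ x ∉ A ∧ y ∈ A ∧ A.erase y = {u} := by
      rcases hA with h | h | h
      exacts [⟨A1, hA1E, hxA1, hyA1, h⟩, ⟨A2, hA2E, hxA2, hyA2, h⟩, ⟨A3, hA3E, hxA3, hyA3, h⟩]
    have hgetB : ∃ B : Finset V, B ∈ E ∧ y ∉ B ∧ x ∈ B ∧ B.erase x = {u} := by
      rcases hB with h | h | h
      exacts [⟨B1, hB1E, hyB1, hxB1, h⟩, ⟨B2, hB2E, hyB2, hxB2, h⟩, ⟨B3, hB3E, hyB3, hxB3, h⟩]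
    obtain ⟨A, hAE, hxA, hyA, hAe⟩ := hgetA
    obtain ⟨B, hBE, hyB, hxBm, hBe⟩ := hgetB
    have hAeq : A = insert y ({u} : Finset V) := by
      rw [← hAe, Finset.insert_erase hyA]
    have hBeq : B = insert x ({u} : Finset V) := by
      rw [← hBe, Finset.insert_erase hxBm]
    have huy : u ≠ y := by
      have : u ∈ A.erase y := by rw [hAe]; simp
      exact (Finset.mem_erase.mp this).1
    have hux : u ≠ x := by
      have : u ∈ B.erase x := by rw [hBe]; simp
      exact (Finset.mem_erase.mp this).1
    exact hTri ⟨x, y, u, hxy, Ne.symm hux, Ne.symm huy, hxyE, hBeq ▸ hBE, hAeq ▸ hAE⟩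
  obtain ⟨W0, ⟨hw1, hw2, hw3⟩, hb1, hb2, hb3⟩ := twoA U (A1.erase y) (A2.erase y) (A3.erase y)
    (B1.erase x) (B2.erase x) (B3.erase x) hUcard
    (haU A1 hxA1) (haU A2 hxA2) (haU A3 hxA3) (hbU B1 hyB1) (hbU B2 hyB2) (hbU B3 hyB3)
    (hane A1 hA1E hyA1) (hane A2 hA2E hyA2) (hane A3 hA3E hyA3)
    (hbne B1 hB1E hxB1) (hbne B2 hB2E hxB2) (hbne B3 hB3E hxB3)
    hbud htri
  set W : Finset V := W0 ∩ U with hWdef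
  have hWU : W ⊆ U := Finset.inter_subset_right
  have hup : ∀ (a : Finset V), a ⊆ U → (a ∩ W0).Nonempty → (a ∩ W).Nonempty := by
    intro a haUs ⟨t, ht⟩
    obtain ⟨ht1, ht2⟩ := Finset.mem_inter.mp ht
    exact ⟨t, Finset.mem_inter.mpr ⟨ht1, Finset.mem_inter.mpr ⟨ht2, haUs ht1⟩⟩⟩
  have hw1' := hup (A1.erase y) (haU A1 hxA1) hw1
  have hw2' := hup (A2.erase y) (haU A2 hxA2) hw2
  have hw3' := hup (A3.erase y) (haU A3 hxA3) hw3
  have hbW1 : ¬ B1.erase x ⊆ W := fun hsub => hb1 fun t ht => (Finset.mem_inter.mp (hsub ht)).1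
  have hbW2 : ¬ B2.erase x ⊆ W := fun hsub => hb2 fun t ht => (Finset.mem_inter.mp (hsub ht)).1
  have hbW3 : ¬ B3.erase x ⊆ W := fun hsub => hb3 fun t ht => (Finset.mem_inter.mp (hsub ht)).1
  refine ⟨insert x W, ?_, ?_⟩
  · intro g hg
    by_cases hxg : x ∈ g
    · exact ⟨x, hxg, Finset.mem_insert_self x W⟩
    · rcases exact3 hdA g hg hxg with h | h | h <;> rw [h]
      · obtain ⟨t, ht⟩ := hw1'
        obtain ⟨ht1, ht2⟩ := Finset.mem_inter.mp ht
        exact ⟨t, (Finset.mem_erase.mp ht1).2, Finset.mem_insert_of_mem ht2⟩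
      · obtain ⟨t, ht⟩ := hw2'
        obtain ⟨ht1, ht2⟩ := Finset.mem_inter.mp ht
        exact ⟨t, (Finset.mem_erase.mp ht1).2, Finset.mem_insert_of_mem ht2⟩
      · obtain ⟨t, ht⟩ := hw3'
        obtain ⟨ht1, ht2⟩ := Finset.mem_inter.mp ht
        exact ⟨t, (Finset.mem_erase.mp ht1).2, Finset.mem_insert_of_mem ht2⟩
  · intro g hg hsub
    have hyg : y ∉ g := by
      intro hyg
      rcases Finset.mem_insert.mp (hsub hyg) with h | h
      · exact hxy h.symm
      · exact ((hUmem y).mp (hWU h)).2 rfl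
    have hkey : ∀ B : Finset V, g = B → ¬ B.erase x ⊆ W → False := by
      intro B hgB hnsub
      apply hnsub
      intro t ht
      obtain ⟨htx, htB⟩ := Finset.mem_erase.mp ht
      rw [← hgB] at htB
      rcases Finset.mem_insert.mp (hsub htB) with h | h
      · exact absurd h htx
      · exact h
    rcases exact3 hdB g hg hyg with h | h | h
    exacts [hkey B1 h hbW1, hkey B2 h hbW2, hkey B3 h hbW3]


/-- helper for case II, r2 shape: v covers f1,f2 ; pick witness in f3. -/
theorem caseII_r2
    (hE2 : ∀ e ∈ E, 2 ≤ e.card)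
    (hTri : ¬ ∃ a b c : V, a ≠ b ∧ a ≠ c ∧ b ≠ c ∧
      ({a, b} : Finset V) ∈ E ∧ ({a, c} : Finset V) ∈ E ∧ ({b, c} : Finset V) ∈ E)
    (x w v : V) (f1 f2 f3 : Finset V)
    (hmem : ∀ g ∈ E, x ∉ g → g = f1 ∨ g = f2 ∨ g = f3)
    (hallw : ∀ g ∈ E, w ∉ g → g = f1 ∨ g = f2 ∨ g = f3)
    (hf1 : f1 ∈ E) (hxf1 : x ∉ f1) (hf2 : f2 ∈ E) (hxf2 : x ∉ f2)
    (hf3 : f3 ∈ E) (hxf3 : x ∉ f3)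
    (hv1 : v ∈ f1) (hv2 : v ∈ f2) (hv3 : v ∉ f3)
    (hwx : w ≠ x) (hwf1 : w ∉ f1) (hwf2 : w ∉ f2) (hwf3 : w ∉ f3) :
    ∃ S : Finset V, (∀ g ∈ E, ∃ z ∈ g, z ∈ S) ∧ (∀ g ∈ E, ¬ g ⊆ S) := by
  by_cases hgood : ∃ u ∈ f3, f1 ≠ {v, u} ∧ f2 ≠ {v, u}
  · obtain ⟨u, hu, hg1, hg2⟩ := hgood
    refine ⟨{x, v, u}, ?_, ?_⟩
    · intro g hg
      by_cases hx : x ∈ g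
      · exact ⟨x, hx, by simp⟩
      · rcases hmem g hg hx with h | h | h <;> rw [h]
        · exact ⟨v, hv1, by simp⟩
        · exact ⟨v, hv2, by simp⟩
        · exact ⟨u, hu, by simp⟩
    · intro g hg hsub
      have hwS : w ∉ ({x, v, u} : Finset V) := by
        simp only [Finset.mem_insert, Finset.mem_singleton]
        push_neg
        refine ⟨hwx, ?_, ?_⟩
        · rintro rfl; exact hwf1 hv1
        · rintro rfl; exact hwf3 hu
      have hwg : w ∉ g := fun hwg => hwS (hsub hwg)
      rcases hallw g hg hwg with h | h | h <;> rw [h] at hsub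
      · refine hg1 (eq_pair (hE2 _ hf1) ?_)
        intro t ht
        have h2 := hsub ht
        simp only [Finset.mem_insert, Finset.mem_singleton] at h2 ⊢
        rcases h2 with rfl | h2
        · exact absurd ht hxf1
        · exact h2
      · refine hg2 (eq_pair (hE2 _ hf2) ?_)
        intro t ht
        have h2 := hsub ht
        simp only [Finset.mem_insert, Finset.mem_singleton] at h2 ⊢
        rcases h2 with rfl | h2
        · exact absurd ht hxf2
        · exact h2
      · have hcard := hE2 _ hf3
        have hsub' : f3 ⊆ {u} := by
          intro t ht
          have h2 := hsub ht
          simp only [Finset.mem_insert, Finset.mem_singleton] at h2 ⊢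
          rcases h2 with rfl | rfl | h2
          · exact absurd ht hxf3
          · exact absurd ht hv3
          · exact h2
        have hle := Finset.card_le_card hsub'
        rw [Finset.card_singleton] at hle
        omega
  · push_neg at hgood
    have hgood' : ∀ u ∈ f3, f1 = {v, u} ∨ f2 = {v, u} := by
      intro u hu
      by_cases hc : f1 = {v, u}
      · exact Or.inl hc
      · exact Or.inr (hgood u hu hc)
    obtain ⟨α, hα, β, hβ, hαβ⟩ := Finset.one_lt_card.mp (hE2 f3 hf3)
    have hvα : v ≠ α := fun h => hv3 (h ▸ hα)
    have hvβ : v ≠ β := fun h => hv3 (h ▸ hβ)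
    have key : ∀ γ δ : V, γ ∈ f3 → δ ∈ f3 → γ ≠ δ →
        f1 = {v, γ} → f2 = {v, δ} → False := by
      intro γ δ hγ hδ hγδ h1 h2
      have hvγ : v ≠ γ := fun h => hv3 (h ▸ hγ)
      have hvδ : v ≠ δ := fun h => hv3 (h ▸ hδ)
      have hf3sub : f3 ⊆ {γ, δ} := by
        intro t ht
        rcases hgood' t ht with h | h
        · have hmem2 : γ ∈ f1 := by rw [h1]; simp
          rw [h] at hmem2
          simp only [Finset.mem_insert, Finset.mem_singleton] at hmem2 ⊢
          rcases hmem2 with rfl | rfl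
          · exact absurd hγ hv3
          · simp
        · have hmem2 : δ ∈ f2 := by rw [h2]; simp
          rw [h] at hmem2
          simp only [Finset.mem_insert, Finset.mem_singleton] at hmem2 ⊢
          rcases hmem2 with rfl | rfl
          · exact absurd hδ hv3
          · simp
      have hf3eq : f3 = {γ, δ} := eq_pair (hE2 _ hf3) hf3sub
      exact no_tri hTri hvγ hvδ hγδ (h1 ▸ hf1) (h2 ▸ hf2) (hf3eq ▸ hf3)
    have same1 : ∀ γ δ : V, γ ∈ f3 → δ ∈ f3 → f1 = {v, γ} → f1 = {v, δ} → γ = δ := by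
      intro γ δ hγ hδ h1 h2
      have : δ ∈ ({v, γ} : Finset V) := by rw [← h1, h2]; simp
      simp only [Finset.mem_insert, Finset.mem_singleton] at this
      rcases this with rfl | h
      · exact absurd hδ hv3
      · exact h.symm
    have same2 : ∀ γ δ : V, γ ∈ f3 → δ ∈ f3 → f2 = {v, γ} → f2 = {v, δ} → γ = δ := by
      intro γ δ hγ hδ h1 h2
      have : δ ∈ ({v, γ} : Finset V) := by rw [← h1, h2]; simp
      simp only [Finset.mem_insert, Finset.mem_singleton] at this
      rcases this with rfl | h
      · exact absurd hδ hv3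
      · exact h.symm
    rcases hgood' α hα with h1 | h1 <;> rcases hgood' β hβ with h2 | h2
    · exact absurd (same1 α β hα hβ h1 h2) hαβ
    · exact (key α β hα hβ hαβ h1 h2).elim
    · exact (key β α hβ hα (Ne.symm hαβ) h2 h1).elim
    · exact absurd (same2 α β hα hβ h1 h2) hαβ

/-- Case II main. -/
theorem caseII (hn : 6 ≤ Fintype.card V)
    (hm : ∀ v : V, Multiset.card (miss E v) = 3)
    (hE2 : ∀ e ∈ E, 2 ≤ e.card)
    (hTri : ¬ ∃ a b c : V, a ≠ b ∧ a ≠ c ∧ b ≠ c ∧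
      ({a, b} : Finset V) ∈ E ∧ ({a, c} : Finset V) ∈ E ∧ ({b, c} : Finset V) ∈ E)
    (hndom : ∀ x' y : V, x' ≠ y → ∃ g ∈ E, x' ∉ g ∧ y ∉ g)
    (x w : V) (p q r : Finset V) (hdc : miss E x = {p, q, r})
    (hwx : w ≠ x) (hwp : w ∉ p) (hwq : w ∉ q) (hwr : w ∉ r) :
    ∃ S : Finset V, (∀ z ∈ E, ∃ u ∈ z, u ∈ S) ∧ (∀ g ∈ E, ¬ g ⊆ S) := by
  obtain ⟨hpE, hxp⟩ := decomp_mem1 hdc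
  obtain ⟨hqE, hxq⟩ := decomp_mem2 hdc
  obtain ⟨hrE, hxr⟩ := decomp_mem3 hdc
  have hmem := exact3 hdc
  have hallw : ∀ g ∈ E, w ∉ g → g = p ∨ g = q ∨ g = r := by
    have hself : (miss E x).filter (fun g => w ∉ g) = miss E x := by
      apply Multiset.filter_eq_self.mpr
      intro g hg
      rw [hdc] at hg
      simp only [Multiset.insert_eq_cons, Multiset.mem_cons, Multiset.mem_singleton] at hg
      rcases hg with rfl | rfl | rfl <;> assumption
    have hle : miss E x ≤ miss E w := by
      conv_lhs => rw [← hself]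
      exact (Multiset.filter_le_filter _ (Multiset.filter_le _ E))
    have heq : miss E x = miss E w := by
      apply Multiset.eq_of_le_of_card_le hle
      rw [hm x, hm w]
    intro g hg hwg
    have hgm : g ∈ miss E w := mem_miss.mpr ⟨hg, hwg⟩
    rw [← heq, hdc] at hgm
    simpa using hgm
  have hthird : ∀ v : V, v ∈ p → v ∈ q → v ∉ r := by
    intro v hv1 hv2 hv3
    have hvx : v ≠ x := fun h => hxp (h ▸ hv1)
    obtain ⟨g, hg, hgx, hgv⟩ := hndom x v (Ne.symm hvx)
    rcases hmem g hg hgx with h | h | h <;> rw [h] at hgv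
    · exact hgv hv1
    · exact hgv hv2
    · exact hgv hv3
  by_cases h12 : ∃ v, v ∈ p ∧ v ∈ q
  · obtain ⟨v, hv1, hv2⟩ := h12
    exact caseII_r2 hE2 hTri x w v p q r hmem hallw hpE hxp hqE hxq hrE hxr
      hv1 hv2 (hthird v hv1 hv2) hwx hwp hwq hwr
  · by_cases h13 : ∃ v, v ∈ p ∧ v ∈ r
    · obtain ⟨v, hv1, hv3⟩ := h13
      have hv2 : v ∉ q := by
        intro hv2
        exact (hthird v hv1 hv2) hv3
      exact caseII_r2 hE2 hTri x w v p r q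
        (fun g hg hx => by rcases hmem g hg hx with h|h|h <;> tauto)
        (fun g hg hx => by rcases hallw g hg hx with h|h|h <;> tauto)
        hpE hxp hrE hxr hqE hxq hv1 hv3 hv2 hwx hwp hwr hwq
    · by_cases h23 : ∃ v, v ∈ q ∧ v ∈ r
      · obtain ⟨v, hv2, hv3⟩ := h23
        have hv1 : v ∉ p := fun hv1 => h13 ⟨v, hv1, hv3⟩
        exact caseII_r2 hE2 hTri x w v q r p
          (fun g hg hx => by rcases hmem g hg hx with h|h|h <;> tauto)
          (fun g hg hx => by rcases hallw g hg hx with h|h|h <;> tauto)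
          hqE hxq hrE hxr hpE hxp hv2 hv3 hv1 hwx hwq hwr hwp
      · push_neg at h12 h13 h23
        obtain ⟨y1, hy1⟩ : p.Nonempty := Finset.card_pos.mp (by have := hE2 p hpE; omega)
        obtain ⟨y2, hy2⟩ : q.Nonempty := Finset.card_pos.mp (by have := hE2 q hqE; omega)
        obtain ⟨y3, hy3⟩ : r.Nonempty := Finset.card_pos.mp (by have := hE2 r hrE; omega)
        refine ⟨{x, y1, y2, y3}, ?_, ?_⟩
        · intro g hg
          by_cases hx : x ∈ g
          · exact ⟨x, hx, by simp⟩
          · rcases hmem g hg hx with h | h | h <;> rw [h]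
            · exact ⟨y1, hy1, by simp⟩
            · exact ⟨y2, hy2, by simp⟩
            · exact ⟨y3, hy3, by simp⟩
        · intro g hg hsub
          have hwS : w ∉ ({x, y1, y2, y3} : Finset V) := by
            simp only [Finset.mem_insert, Finset.mem_singleton]
            push_neg
            refine ⟨hwx, ?_, ?_, ?_⟩
            · rintro rfl; exact hwp hy1
            · rintro rfl; exact hwq hy2
            · rintro rfl; exact hwr hy3
          have hwg : w ∉ g := fun hwg => hwS (hsub hwg)
          rcases hallw g hg hwg with h | h | h <;> rw [h] at hsub
          · have hsub' : p ⊆ {y1} := by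
              intro t ht
              have h2 := hsub ht
              simp only [Finset.mem_insert, Finset.mem_singleton] at h2 ⊢
              rcases h2 with rfl | rfl | rfl | rfl
              · exact absurd ht hxp
              · rfl
              · exact absurd hy2 (h12 t ht)
              · exact absurd hy3 (h13 t ht)
            have hle := Finset.card_le_card hsub'
            rw [Finset.card_singleton] at hle
            have := hE2 p hpE; omega
          · have hsub' : q ⊆ {y2} := by
              intro t ht
              have h2 := hsub ht
              simp only [Finset.mem_insert, Finset.mem_singleton] at h2 ⊢
              rcases h2 with rfl | rfl | rfl | rfl
              · exact absurd ht hxq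
              · exact absurd ht (h12 _ hy1)
              · rfl
              · exact absurd hy3 (h23 t ht)
            have hle := Finset.card_le_card hsub'
            rw [Finset.card_singleton] at hle
            have := hE2 q hqE; omega
          · have hsub' : r ⊆ {y3} := by
              intro t ht
              have h2 := hsub ht
              simp only [Finset.mem_insert, Finset.mem_singleton] at h2 ⊢
              rcases h2 with rfl | rfl | rfl | rfl
              · exact absurd ht hxr
              · exact absurd ht (h13 _ hy1)
              · exact absurd ht (h23 _ hy2)
              · rfl
            have hle := Finset.card_le_card hsub'
            rw [Finset.card_singleton] at hle
            have := hE2 r hrE; omega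
lemma no_four' {v : V} (hm3 : Multiset.card (miss E v) = 3) (g1 g2 g3 g4 : Finset V)
    (m1 : g1 ∈ E) (n1 : v ∉ g1) (m2 : g2 ∈ E) (n2 : v ∉ g2)
    (m3 : g3 ∈ E) (n3 : v ∉ g3) (m4 : g4 ∈ E) (n4 : v ∉ g4)
    (d12 : g1 ≠ g2) (d13 : g1 ≠ g3) (d14 : g1 ≠ g4)
    (d23 : g2 ≠ g3) (d24 : g2 ≠ g4) (d34 : g3 ≠ g4) : False := by
  obtain ⟨a, b, c, hd⟩ := Multiset.card_eq_three.mp hm3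
  have hall : ∀ g ∈ E, v ∉ g → g = a ∨ g = b ∨ g = c := by
    intro g hg hvg
    have hmem : g ∈ miss E v := mem_miss.mpr ⟨hg, hvg⟩
    rw [hd] at hmem; simpa using hmem
  have h1 := hall g1 m1 n1
  have h2 := hall g2 m2 n2
  have h3 := hall g3 m3 n3
  have h4 := hall g4 m4 n4
  rcases h1 with rfl|rfl|rfl <;> rcases h2 with rfl|rfl|rfl <;>
    rcases h3 with rfl|rfl|rfl <;> rcases h4 with rfl|rfl|rfl <;> tauto

/-- Exactness: if v misses three pairwise distinct member sets, every missed member is one. -/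
lemma exact_of_three {v : V} (hm3 : Multiset.card (miss E v) = 3) {g1 g2 g3 : Finset V}
    (m1 : g1 ∈ E) (n1 : v ∉ g1) (m2 : g2 ∈ E) (n2 : v ∉ g2) (m3 : g3 ∈ E) (n3 : v ∉ g3)
    (d12 : g1 ≠ g2) (d13 : g1 ≠ g3) (d23 : g2 ≠ g3) :
    ∀ g ∈ E, v ∉ g → g = g1 ∨ g = g2 ∨ g = g3 := by
  intro g hg hvg
  by_contra hcon
  push_neg at hcon
  exact no_four' hm3 g1 g2 g3 g m1 n1 m2 n2 m3 n3 hg hvg d12 d13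
    (Ne.symm hcon.1) d23 (Ne.symm hcon.2.1) (Ne.symm hcon.2.2)

/-- third with a doubled set. -/
lemma third2 {v : V} (hm3 : Multiset.card (miss E v) = 3) {s : Finset V}
    (hss : ({s, s} : Multiset (Finset V)) ≤ miss E v) :
    ∃ h, (h ∈ E ∧ v ∉ h) ∧ ∀ g ∈ E, v ∉ g → g = s ∨ g = h := by
  obtain ⟨u, hu⟩ := Multiset.le_iff_exists_add.mp hss
  have hcard : Multiset.card u = 1 := by
    have h2 := congrArg Multiset.card hu
    rw [hm3, Multiset.card_add] at h2
    simp at h2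
    omega
  obtain ⟨h, rfl⟩ := Multiset.card_eq_one.mp hcard
  refine ⟨h, ?_, ?_⟩
  · have : h ∈ miss E v := by rw [hu]; simp
    exact mem_miss.mp this
  · intro g hg hvg
    have hmem : g ∈ miss E v := mem_miss.mpr ⟨hg, hvg⟩
    rw [hu] at hmem
    simp at hmem
    tauto

lemma three_of_card {s : Finset V} (h : 3 ≤ s.card) :
    ∃ a b c, a ∈ s ∧ b ∈ s ∧ c ∈ s ∧ a ≠ b ∧ a ≠ c ∧ b ≠ c := by
  obtain ⟨a, ha, b, hb, hab⟩ := Finset.one_lt_card.mp (show 1 < s.card by omega)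
  have hcard : 1 ≤ ((s.erase a).erase b).card := by
    rw [Finset.card_erase_of_mem (Finset.mem_erase.mpr ⟨Ne.symm hab, hb⟩),
      Finset.card_erase_of_mem ha]
    omega
  obtain ⟨c, hc⟩ := Finset.card_pos.mp (show 0 < ((s.erase a).erase b).card by omega)
  obtain ⟨hcb, hc2⟩ := Finset.mem_erase.mp hc
  obtain ⟨hca, hcs⟩ := Finset.mem_erase.mp hc2
  exact ⟨a, b, c, ha, hb, hcs, hab, Ne.symm hca, Ne.symm hcb⟩

lemma four_of_card {s : Finset V} (h : 4 ≤ s.card) :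
    ∃ a b c d, a ∈ s ∧ b ∈ s ∧ c ∈ s ∧ d ∈ s ∧
      a ≠ b ∧ a ≠ c ∧ a ≠ d ∧ b ≠ c ∧ b ≠ d ∧ c ≠ d := by
  obtain ⟨a, b, c, ha, hb, hc, hab, hac, hbc⟩ := three_of_card (by omega : 3 ≤ s.card)
  have hcard : 1 ≤ (((s.erase a).erase b).erase c).card := by
    rw [Finset.card_erase_of_mem (Finset.mem_erase.mpr ⟨Ne.symm hbc,
        Finset.mem_erase.mpr ⟨Ne.symm hac, hc⟩⟩),
      Finset.card_erase_of_mem (Finset.mem_erase.mpr ⟨Ne.symm hab, hb⟩),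
      Finset.card_erase_of_mem ha]
    omega
  obtain ⟨d, hd⟩ := Finset.card_pos.mp (show 0 < (((s.erase a).erase b).erase c).card by omega)
  obtain ⟨hdc, hd2⟩ := Finset.mem_erase.mp hd
  obtain ⟨hdb, hd3⟩ := Finset.mem_erase.mp hd2
  obtain ⟨hda, hds⟩ := Finset.mem_erase.mp hd3
  exact ⟨a, b, c, d, ha, hb, hc, hds, hab, hac, Ne.symm hda, hbc, Ne.symm hdb, Ne.symm hdc⟩

lemma eq_pair_of_two {s : Finset V} {w1 w2 : V} (h1 : w1 ∈ s) (h2 : w2 ∈ s)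
    (hne : w1 ≠ w2) (hall : ∀ w ∈ s, w = w1 ∨ w = w2) : s = {w1, w2} := by
  apply Finset.Subset.antisymm
  · intro t ht
    rcases hall t ht with rfl | rfl <;> simp
  · intro t ht
    simp only [Finset.mem_insert, Finset.mem_singleton] at ht
    rcases ht with rfl | rfl <;> assumption



lemma card_le3' (a b c : V) : ({a, b, c} : Finset V).card ≤ 3 := by
  refine (Finset.card_insert_le _ _).trans ?_
  have h : ({b, c} : Finset V).card ≤ 2 := (Finset.card_insert_le _ _).trans (by simp)
  omega

lemma card_le4' (a b c d : V) : ({a, b, c, d} : Finset V).card ≤ 4 := by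
  refine (Finset.card_insert_le _ _).trans ?_
  have h := card_le3' b c d
  omega

lemma card_le5' (a b c d e : V) : ({a, b, c, d, e} : Finset V).card ≤ 5 := by
  refine (Finset.card_insert_le _ _).trans ?_
  have h := card_le4' b c d e
  omega


lemma perm_swap23 (a b c : Finset V) :
    ({a, b, c} : Multiset (Finset V)) = {a, c, b} := by
  change a ::ₘ b ::ₘ c ::ₘ 0 = a ::ₘ c ::ₘ b ::ₘ 0
  exact congrArg (a ::ₘ ·) (Multiset.cons_swap b c 0)

lemma perm_swap12 (a b c : Finset V) :
    ({a, b, c} : Multiset (Finset V)) = {b, a, c} := by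
  change a ::ₘ b ::ₘ c ::ₘ 0 = b ::ₘ a ::ₘ c ::ₘ 0
  exact Multiset.cons_swap a b _

lemma perm_rot (a b c : Finset V) :
    ({a, b, c} : Multiset (Finset V)) = {b, c, a} := by
  rw [perm_swap12, perm_swap23]


theorem caseIII_deg
    (hn : 6 ≤ Fintype.card V)
    (hm : ∀ v : V, Multiset.card (miss E v) = 3)
    (hE2 : ∀ e ∈ E, 2 ≤ e.card)
    (hTri : ¬ ∃ a b c : V, a ≠ b ∧ a ≠ c ∧ b ≠ c ∧
      ({a, b} : Finset V) ∈ E ∧ ({a, c} : Finset V) ∈ E ∧ ({b, c} : Finset V) ∈ E)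
    (x : V) (f1 f2 f3 : Finset V) (hdc : miss E x = {f1, f2, f3})
    (hni : ∀ u : V, u ≠ x → u ∉ f1 ∨ u ∉ f2 ∨ u ∉ f3)
    (heq : f1 = f2) :
    ∃ S : Finset V, (∀ g ∈ E, ∃ w ∈ g, w ∈ S) ∧ (∀ g ∈ E, ¬ g ⊆ S) := by
  classical
  subst heq
  obtain ⟨hf1E, hxf1⟩ := decomp_mem1 hdc
  obtain ⟨hf3E, hxf3⟩ := decomp_mem3 hdc
  have hmem := exact3 hdc
  have hdisj : ∀ u, u ∈ f1 → u ∉ f3 := by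
    intro u hu hu3
    have hux : u ≠ x := fun h => hxf1 (h ▸ hu)
    rcases hni u hux with h | h | h
    exacts [h hu, h hu, h hu3]
  have hEXC : ∀ s : V, s ∈ f3 → ∃ h, (h ∈ E ∧ s ∉ h) ∧ ∀ g ∈ E, s ∉ g → g = f1 ∨ g = h := by
    intro s hs
    have hs1 : s ∉ f1 := fun hc => hdisj s hc hs
    apply third2 (hm s)
    have hsub : ({f1, f1} : Multiset (Finset V)) ≤ (miss E x).filter (fun g => s ∉ g) := by
      rw [hdc]
      simp only [Multiset.insert_eq_cons, Multiset.filter_cons, if_pos hs1,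
        Multiset.filter_singleton, if_neg (not_not_intro hs)]
      simp
    calc ({f1, f1} : Multiset (Finset V)) ≤ (miss E x).filter (fun g => s ∉ g) := hsub
      _ ≤ miss E s := by
          unfold miss
          exact Multiset.filter_le_filter _ (Multiset.filter_le _ E)
  by_contra hno
  push_neg at hno
  have hblock : ∀ vA vB : V, vA ∈ f1 → vB ∈ f3 → ∃ m ∈ E, m ⊆ ({x, vA, vB} : Finset V) := by
    intro vA vB hA hB
    apply hno
    intro g hg
    by_cases hxg : x ∈ g
    · exact ⟨x, hxg, by simp⟩
    · rcases hmem g hg hxg with h | h | h <;> rw [h]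
      exacts [⟨vA, hA, by simp⟩, ⟨vA, hA, by simp⟩, ⟨vB, hB, by simp⟩]
  have hbx : ∀ (m : Finset V) (vA vB : V), m ∈ E → vA ∈ f1 → vB ∈ f3 →
      m ⊆ ({x, vA, vB} : Finset V) → x ∈ m := by
    intro m vA vB hmE hA hB hsub
    by_contra hxm
    have hsmall : ∀ f : Finset V, f ∈ E → x ∉ f → (∀ t ∈ f, t = vA ∨ t = vB) →
        (∀ t ∈ f, t ≠ vA) ∨ (∀ t ∈ f, t ≠ vB) → False := by
      intro f hfE hxf hf hcase
      have hcard := hE2 f hfE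
      rcases hcase with hc | hc
      · have : f ⊆ {vB} := by
          intro t ht
          rcases hf t ht with h | h
          · exact absurd h (hc t ht)
          · simp [h]
        have := Finset.card_le_card this
        simp at this; omega
      · have : f ⊆ {vA} := by
          intro t ht
          rcases hf t ht with h | h
          · simp [h]
          · exact absurd h (hc t ht)
        have := Finset.card_le_card this
        simp at this; omega
    have hin : ∀ (f : Finset V), f ⊆ ({x, vA, vB} : Finset V) → x ∉ f → ∀ t ∈ f, t = vA ∨ t = vB := by
      intro f hfsub hxf t ht
      have := hfsub ht
      simp only [Finset.mem_insert, Finset.mem_singleton] at this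
      rcases this with rfl | h
      · exact absurd ht hxf
      · exact h
    rcases hmem m hmE hxm with h | h | h <;> rw [h] at hsub
    · exact hsmall f1 hf1E hxf1 (hin f1 hsub hxf1) (Or.inr (fun t ht hc => hdisj t ht (hc ▸ hB)))
    · exact hsmall f1 hf1E hxf1 (hin f1 hsub hxf1) (Or.inr (fun t ht hc => hdisj t ht (hc ▸ hB)))
    · exact hsmall f3 hf3E hxf3 (hin f3 hsub hxf3) (Or.inl (fun t ht hc => hdisj vA hA (hc ▸ ht)))
  obtain ⟨vA, hvA, vA', hvA', hvAne⟩ := Finset.one_lt_card.mp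
    (show 1 < f1.card from by have := hE2 f1 hf1E; omega)
  obtain ⟨t, ht, s, hs, hts⟩ := Finset.one_lt_card.mp
    (show 1 < f3.card from by have := hE2 f3 hf3E; omega)
  obtain ⟨hS, ⟨hhSE, hhSs⟩, hPs⟩ := hEXC s hs
  obtain ⟨hT, ⟨hhTE, hhTt⟩, hPt⟩ := hEXC t ht
  have hxpair : ∀ c d : V, c ∈ f3 → d ∈ f3 → c ≠ d →
      ∀ hD : Finset V, (∀ g ∈ E, d ∉ g → g = f1 ∨ g = hD) → hD = ({x, c} : Finset V) := by
    intro c d hc hd hcd hD hPd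
    obtain ⟨m1, hm1E, hm1sub⟩ := hblock vA c hvA hc
    obtain ⟨m2, hm2E, hm2sub⟩ := hblock vA' c hvA' hc
    have hdx : d ≠ x := fun h => hxf3 (h ▸ hd)
    have hd1 : d ∉ m1 := by
      intro hh
      have := hm1sub hh
      simp only [Finset.mem_insert, Finset.mem_singleton] at this
      rcases this with h | h | h
      exacts [hdx h, hdisj vA hvA (h ▸ hd), hcd h.symm]
    have hd2 : d ∉ m2 := by
      intro hh
      have := hm2sub hh
      simp only [Finset.mem_insert, Finset.mem_singleton] at this
      rcases this with h | h | h
      exacts [hdx h, hdisj vA' hvA' (h ▸ hd), hcd h.symm]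
    have hx1 : x ∈ m1 := hbx m1 vA c hm1E hvA hc hm1sub
    have hx2 : x ∈ m2 := hbx m2 vA' c hm2E hvA' hc hm2sub
    have e1 : m1 = hD := by
      rcases hPd m1 hm1E hd1 with h | h
      · exact absurd (h ▸ hx1) hxf1
      · exact h
    have e2 : m2 = hD := by
      rcases hPd m2 hm2E hd2 with h | h
      · exact absurd (h ▸ hx2) hxf1
      · exact h
    have hsubxc : m1 ⊆ ({x, c} : Finset V) := by
      intro z hz
      have z1 := hm1sub hz
      have z2 := hm2sub (show z ∈ m2 from by rw [e2, ← e1]; exact hz)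
      simp only [Finset.mem_insert, Finset.mem_singleton] at z1 z2 ⊢
      rcases z1 with h | h | h
      · exact Or.inl h
      · rcases z2 with h' | h' | h'
        · exact Or.inl h'
        · exact absurd (h.symm.trans h') hvAne
        · exact Or.inr h'
      · exact Or.inr h
    rw [← e1]
    exact eq_pair (hE2 m1 hm1E) hsubxc
  have hSval : hS = ({x, t} : Finset V) := hxpair t s ht hs hts hS hPs
  have hTval : hT = ({x, s} : Finset V) := hxpair s t hs ht (Ne.symm hts) hT hPt
  by_cases h3 : ∀ w ∈ f3, w = t ∨ w = s
  · have hf3eq : f3 = {t, s} := eq_pair_of_two ht hs hts h3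
    have htx : t ≠ x := fun h => hxf3 (h ▸ ht)
    have hsx : s ≠ x := fun h => hxf3 (h ▸ hs)
    exact absurd (hTri ⟨x, t, s, Ne.symm htx, Ne.symm hsx, hts,
      hSval ▸ hhSE, hTval ▸ hhTE, hf3eq ▸ hf3E⟩) not_false
  · push_neg at h3
    obtain ⟨w3, hw3, hw3t, hw3s⟩ := h3
    obtain ⟨m3, hm3E, hm3sub⟩ := hblock vA w3 hvA hw3
    have hsx : s ≠ x := fun h => hxf3 (h ▸ hs)
    have hs3 : s ∉ m3 := by
      intro hh
      have := hm3sub hh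
      simp only [Finset.mem_insert, Finset.mem_singleton] at this
      rcases this with h | h | h
      exacts [hsx h, hdisj vA hvA (h ▸ hs), hw3s h.symm]
    have hx3 : x ∈ m3 := hbx m3 vA w3 hm3E hvA hw3 hm3sub
    have e3 : m3 = hS := by
      rcases hPs m3 hm3E hs3 with h | h
      · exact absurd (h ▸ hx3) hxf1
      · exact h
    have htm3 : t ∈ m3 := by rw [e3, hSval]; simp
    have := hm3sub htm3
    simp only [Finset.mem_insert, Finset.mem_singleton] at this
    rcases this with h | h | h
    · exact absurd h (fun hh => hxf3 (hh ▸ ht))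
    · exact hdisj vA hvA (h ▸ ht)
    · exact hw3t h.symm

theorem caseIII_dempty
    (hn : 6 ≤ Fintype.card V)
    (hm : ∀ v : V, Multiset.card (miss E v) = 3)
    (hE2 : ∀ e ∈ E, 2 ≤ e.card)
    (x : V) (f1 f2 f3 : Finset V) (hdc : miss E x = {f1, f2, f3})
    (hcov : ∀ u : V, u ≠ x → u ∈ f1 ∨ u ∈ f2 ∨ u ∈ f3)
    (hd12 : f1 ≠ f2) (hd13 : f1 ≠ f3) (hd23 : f2 ≠ f3)
    (hnd : ∀ v : V, ¬((v ∈ f1 ∧ v ∈ f2) ∨ (v ∈ f1 ∧ v ∈ f3) ∨ (v ∈ f2 ∧ v ∈ f3))) :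
    ∃ S : Finset V, (∀ g ∈ E, ∃ w ∈ g, w ∈ S) ∧ (∀ g ∈ E, ¬ g ⊆ S) := by
  classical
  obtain ⟨hf1E, hxf1⟩ := decomp_mem1 hdc
  obtain ⟨hf2E, hxf2⟩ := decomp_mem2 hdc
  obtain ⟨hf3E, hxf3⟩ := decomp_mem3 hdc
  have hmem := exact3 hdc
  have h12 : ∀ v, v ∈ f1 → v ∉ f2 := fun v h hc => hnd v (Or.inl ⟨h, hc⟩)
  have h13 : ∀ v, v ∈ f1 → v ∉ f3 := fun v h hc => hnd v (Or.inr (Or.inl ⟨h, hc⟩))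
  have h23 : ∀ v, v ∈ f2 → v ∉ f3 := fun v h hc => hnd v (Or.inr (Or.inr ⟨h, hc⟩))
  have hEXC : ∀ t : V, t ≠ x → ∃ h, h ∈ E ∧ t ∉ h ∧
      ∀ g ∈ E, t ∉ g → x ∈ g → g = h := by
    intro t htx
    rcases hcov t htx with h | h | h
    · obtain ⟨hh, ⟨hhE, hht⟩, hP⟩ := third (hm t) hf2E (h12 t h) hf3E (h13 t h) hd23
      refine ⟨hh, hhE, hht, fun g hg htg hxg => ?_⟩
      rcases hP g hg htg with h' | h' | h'
      · exact absurd (h' ▸ hxg) hxf2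
      · exact absurd (h' ▸ hxg) hxf3
      · exact h'
    · obtain ⟨hh, ⟨hhE, hht⟩, hP⟩ := third (hm t) hf1E (fun hc => h12 t hc h) hf3E (h23 t h) hd13
      refine ⟨hh, hhE, hht, fun g hg htg hxg => ?_⟩
      rcases hP g hg htg with h' | h' | h'
      · exact absurd (h' ▸ hxg) hxf1
      · exact absurd (h' ▸ hxg) hxf3
      · exact h'
    · obtain ⟨hh, ⟨hhE, hht⟩, hP⟩ := third (hm t) hf1E (fun hc => h13 t hc h) hf2E
        (fun hc => h23 t hc h) hd12
      refine ⟨hh, hhE, hht, fun g hg htg hxg => ?_⟩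
      rcases hP g hg htg with h' | h' | h'
      · exact absurd (h' ▸ hxg) hxf1
      · exact absurd (h' ▸ hxg) hxf2
      · exact h'
  by_contra hno
  push_neg at hno
  have hblock : ∀ y1 y2 y3 : V, y1 ∈ f1 → y2 ∈ f2 → y3 ∈ f3 →
      ∃ m ∈ E, m ⊆ ({x, y1, y2, y3} : Finset V) := by
    intro y1 y2 y3 h1 h2 h3
    apply hno
    intro g hg
    by_cases hxg : x ∈ g
    · exact ⟨x, hxg, by simp⟩
    · rcases hmem g hg hxg with h | h | h <;> rw [h]
      exacts [⟨y1, h1, by simp⟩, ⟨y2, h2, by simp⟩, ⟨y3, h3, by simp⟩]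
  have hbx : ∀ (m : Finset V) (y1 y2 y3 : V), m ∈ E → y1 ∈ f1 → y2 ∈ f2 → y3 ∈ f3 →
      m ⊆ ({x, y1, y2, y3} : Finset V) → x ∈ m := by
    intro m y1 y2 y3 hmE h1 h2 h3 hsub
    by_contra hxm
    have hsmall : ∀ (f : Finset V) (z : V), f ∈ E → x ∉ f →
        (∀ t ∈ f, t = z) → False := by
      intro f z hfE hxf hall
      have hcard := hE2 f hfE
      have : f ⊆ {z} := fun t ht => by simp [hall t ht]
      have := Finset.card_le_card this
      simp at this; omega
    rcases hmem m hmE hxm with h | h | h <;> rw [h] at hsub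
    · refine hsmall f1 y1 hf1E hxf1 (fun t ht => ?_)
      have := hsub ht
      simp only [Finset.mem_insert, Finset.mem_singleton] at this
      rcases this with h' | h' | h' | h'
      · exact absurd (h' ▸ ht) hxf1
      · exact h'
      · exact absurd (h' ▸ ht) (fun hc => h12 t ht (h' ▸ h2))
      · exact absurd (h' ▸ ht) (fun hc => h13 t ht (h' ▸ h3))
    · refine hsmall f2 y2 hf2E hxf2 (fun t ht => ?_)
      have := hsub ht
      simp only [Finset.mem_insert, Finset.mem_singleton] at this
      rcases this with h' | h' | h' | h'
      · exact absurd (h' ▸ ht) hxf2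
      · exact absurd (h' ▸ ht) (fun hc => h12 y1 h1 (h' ▸ ht))
      · exact h'
      · exact absurd (h' ▸ ht) (fun hc => h23 t ht (h' ▸ h3))
    · refine hsmall f3 y3 hf3E hxf3 (fun t ht => ?_)
      have := hsub ht
      simp only [Finset.mem_insert, Finset.mem_singleton] at this
      rcases this with h' | h' | h' | h'
      · exact absurd (h' ▸ ht) hxf3
      · exact absurd (h' ▸ ht) (fun hc => h13 y1 h1 (h' ▸ ht))
      · exact absurd (h' ▸ ht) (fun hc => h23 y2 h2 (h' ▸ ht))
      · exact h'
  by_cases hc : ∃ c, c ≠ x ∧ ({x, c} : Finset V) ∈ E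
  · obtain ⟨c, hcx, hcE⟩ := hc
    have hyi : ∀ f : Finset V, f ∈ E → ∃ y ∈ f, y ≠ c := by
      intro f hfE
      obtain ⟨a, ha, b, hb, hab⟩ := Finset.one_lt_card.mp
        (show 1 < f.card from by have := hE2 f hfE; omega)
      by_cases h : a = c
      · exact ⟨b, hb, fun hh => hab (h.trans hh.symm)⟩
      · exact ⟨a, ha, h⟩
    obtain ⟨y1, hy1, hy1c⟩ := hyi f1 hf1E
    obtain ⟨y2, hy2, hy2c⟩ := hyi f2 hf2E
    obtain ⟨y3, hy3, hy3c⟩ := hyi f3 hf3E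
    obtain ⟨m, hmE, hmsub⟩ := hblock y1 y2 y3 hy1 hy2 hy3
    have hxm : x ∈ m := hbx m y1 y2 y3 hmE hy1 hy2 hy3 hmsub
    obtain ⟨t, hts⟩ := exists_out ({x, y1, y2, y3, c} : Finset V)
      (lt_of_le_of_lt (card_le5' x y1 y2 y3 c) (by omega))
    simp only [Finset.mem_insert, Finset.mem_singleton] at hts
    push_neg at hts
    obtain ⟨htx, hty1, hty2, hty3, htc⟩ := hts
    obtain ⟨ht, hhE, hht, hP⟩ := hEXC t htx
    have htm : t ∉ m := by
      intro hh
      have := hmsub hh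
      simp only [Finset.mem_insert, Finset.mem_singleton] at this
      tauto
    have hm_eq : m = ht := hP m hmE htm hxm
    have hxc_eq : ({x, c} : Finset V) = ht := by
      refine hP _ hcE ?_ (by simp)
      simp [htx, htc]
    have hcm : c ∈ m := by
      rw [hm_eq, ← hxc_eq]
      simp
    have := hmsub hcm
    simp only [Finset.mem_insert, Finset.mem_singleton] at this
    rcases this with h | h | h | h
    exacts [hcx h, hy1c h.symm, hy2c h.symm, hy3c h.symm]
  · push_neg at hc
    obtain ⟨y1, hy1⟩ := Finset.card_pos.mp
      (show 0 < f1.card from by have := hE2 f1 hf1E; omega)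
    obtain ⟨y2, hy2⟩ := Finset.card_pos.mp
      (show 0 < f2.card from by have := hE2 f2 hf2E; omega)
    obtain ⟨y3, hy3⟩ := Finset.card_pos.mp
      (show 0 < f3.card from by have := hE2 f3 hf3E; omega)
    obtain ⟨m, hmE, hmsub⟩ := hblock y1 y2 y3 hy1 hy2 hy3
    have hxm : x ∈ m := hbx m y1 y2 y3 hmE hy1 hy2 hy3 hmsub
    obtain ⟨β, hβm, hβx⟩ : ∃ β ∈ m, β ≠ x := by
      obtain ⟨a, ha, b, hb, hab⟩ := Finset.one_lt_card.mp
        (show 1 < m.card from by have := hE2 m hmE; omega)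
      by_cases h : a = x
      · exact ⟨b, hb, fun hh => hab (h.trans hh.symm)⟩
      · exact ⟨a, ha, h⟩
    have hswap : ∀ (f : Finset V) (z : V), f ∈ E → z ∈ f → ∃ y ∈ f, y ≠ z := by
      intro f z hfE hz
      obtain ⟨a, ha, b, hb, hab⟩ := Finset.one_lt_card.mp
        (show 1 < f.card from by have := hE2 f hfE; omega)
      by_cases h : a = z
      · exact ⟨b, hb, fun hh => hab (h.trans hh.symm)⟩
      · exact ⟨a, ha, h⟩
    have hkey : ∀ (y1' y2' y3' : V), y1' ∈ f1 → y2' ∈ f2 → y3' ∈ f3 →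
        β ∉ ({y1', y2', y3'} : Finset V) →
        (({x, y1, y2, y3} ∪ {y1', y2', y3'} : Finset V)).card < Fintype.card V → False := by
      intro y1' y2' y3' h1 h2 h3 hβnot hcard
      obtain ⟨m', hm'E, hm'sub⟩ := hblock y1' y2' y3' h1 h2 h3
      have hxm' : x ∈ m' := hbx m' y1' y2' y3' hm'E h1 h2 h3 hm'sub
      obtain ⟨t, hts⟩ := exists_out _ hcard
      simp only [Finset.mem_union, Finset.mem_insert, Finset.mem_singleton] at hts
      push_neg at hts
      obtain ⟨⟨htx, hty1, hty2, hty3⟩, hty1', hty2', hty3'⟩ := hts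
      obtain ⟨ht, hhE, hht, hP⟩ := hEXC t htx
      have htm : t ∉ m := by
        intro hh
        have := hmsub hh
        simp only [Finset.mem_insert, Finset.mem_singleton] at this
        tauto
      have htm' : t ∉ m' := by
        intro hh
        have := hm'sub hh
        simp only [Finset.mem_insert, Finset.mem_singleton] at this
        tauto
      have e1 : m = ht := hP m hmE htm hxm
      have e2 : m' = ht := hP m' hm'E htm' hxm'
      have hβm' : β ∈ m' := by rw [e2, ← e1]; exact hβm
      have := hm'sub hβm'
      simp only [Finset.mem_insert, Finset.mem_singleton] at this hβnot
      push_neg at hβnot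
      rcases this with h | h | h | h
      exacts [hβx h, hβnot.1 h, hβnot.2.1 h, hβnot.2.2 h]
    have hβmem := hmsub hβm
    simp only [Finset.mem_insert, Finset.mem_singleton] at hβmem
    rcases hβmem with h | h | h | h
    · exact absurd h hβx
    · -- β = y1 : swap coordinate 1
      obtain ⟨y1', hy1', hy1'β⟩ := hswap f1 y1 hf1E hy1
      have hβf1 : β ∈ f1 := h.symm ▸ hy1
      refine hkey y1' y2 y3 hy1' hy2 hy3 ?_ ?_
      · simp only [Finset.mem_insert, Finset.mem_singleton]
        push_neg
        refine ⟨fun hh => hy1'β (hh.symm.trans h), ?_, ?_⟩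
        · intro hh; exact h12 β hβf1 (hh.symm ▸ hy2)
        · intro hh; exact h13 β hβf1 (hh.symm ▸ hy3)
      · refine lt_of_le_of_lt (Finset.card_le_card ?_) (lt_of_le_of_lt (card_le5' x y1 y2 y3 y1') (by omega))
        intro z hz
        simp only [Finset.mem_union, Finset.mem_insert, Finset.mem_singleton] at hz ⊢
        tauto
    · obtain ⟨y2', hy2', hy2'β⟩ := hswap f2 y2 hf2E hy2
      have hβf2 : β ∈ f2 := h.symm ▸ hy2
      refine hkey y1 y2' y3 hy1 hy2' hy3 ?_ ?_
      · simp only [Finset.mem_insert, Finset.mem_singleton]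
        push_neg
        refine ⟨?_, fun hh => hy2'β (hh.symm.trans h), ?_⟩
        · intro hh; exact h12 β (hh.symm ▸ hy1) hβf2
        · intro hh; exact h23 β hβf2 (hh.symm ▸ hy3)
      · refine lt_of_le_of_lt (Finset.card_le_card ?_) (lt_of_le_of_lt (card_le5' x y1 y2 y3 y2') (by omega))
        intro z hz
        simp only [Finset.mem_union, Finset.mem_insert, Finset.mem_singleton] at hz ⊢
        tauto
    · obtain ⟨y3', hy3', hy3'β⟩ := hswap f3 y3 hf3E hy3
      have hβf3 : β ∈ f3 := h.symm ▸ hy3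
      refine hkey y1 y2 y3' hy1 hy2 hy3' ?_ ?_
      · simp only [Finset.mem_insert, Finset.mem_singleton]
        push_neg
        refine ⟨?_, ?_, fun hh => hy3'β (hh.symm.trans h)⟩
        · intro hh; exact h13 β (hh.symm ▸ hy1) hβf3
        · intro hh; exact h23 β (hh.symm ▸ hy2) hβf3
      · refine lt_of_le_of_lt (Finset.card_le_card ?_) (lt_of_le_of_lt (card_le5' x y1 y2 y3 y3') (by omega))
        intro z hz
        simp only [Finset.mem_union, Finset.mem_insert, Finset.mem_singleton] at hz ⊢
        tauto

theorem caseIII_nogood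
    (hn : 6 ≤ Fintype.card V)
    (hm : ∀ v : V, Multiset.card (miss E v) = 3)
    (hE2 : ∀ e ∈ E, 2 ≤ e.card)
    (x : V) (f1 f2 f3 : Finset V) (hdc : miss E x = {f1, f2, f3})
    (hni : ∀ u : V, u ≠ x → u ∉ f1 ∨ u ∉ f2 ∨ u ∉ f3)
    (hcov : ∀ u : V, u ≠ x → u ∈ f1 ∨ u ∈ f2 ∨ u ∈ f3)
    (hd12 : f1 ≠ f2) (hd13 : f1 ≠ f3) (hd23 : f2 ≠ f3)
    (d0 : V) (hd0 : (d0 ∈ f1 ∧ d0 ∈ f2) ∨ (d0 ∈ f1 ∧ d0 ∈ f3) ∨ (d0 ∈ f2 ∧ d0 ∈ f3))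
    (hall : ∀ v : V, (v ∈ f1 ∧ v ∈ f2) ∨ (v ∈ f1 ∧ v ∈ f3) ∨ (v ∈ f2 ∧ v ∈ f3) →
      ({x, v} : Finset V) ∈ E) :
    ∃ S : Finset V, (∀ g ∈ E, ∃ w ∈ g, w ∈ S) ∧ (∀ g ∈ E, ¬ g ⊆ S) := by
  classical
  obtain ⟨hf1E, hxf1⟩ := decomp_mem1 hdc
  obtain ⟨hf2E, hxf2⟩ := decomp_mem2 hdc
  obtain ⟨hf3E, hxf3⟩ := decomp_mem3 hdc
  have hmem := exact3 hdc
  have hdblx : ∀ v : V, (v ∈ f1 ∧ v ∈ f2) ∨ (v ∈ f1 ∧ v ∈ f3) ∨ (v ∈ f2 ∧ v ∈ f3) →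
      v ≠ x := by
    rintro v (⟨h, _⟩ | ⟨h, _⟩ | ⟨h, _⟩) rfl
    exacts [hxf1 h, hxf1 h, hxf2 h]
  have hxd0 : ({x, d0} : Finset V) ∈ E := hall d0 hd0
  have hd0x : d0 ≠ x := hdblx d0 hd0
  -- a vertex outside two distinct x-pairs is a double
  have hforce : ∀ (c c' u : V), c ≠ x → c' ≠ x → c ≠ c' →
      ({x, c} : Finset V) ∈ E → ({x, c'} : Finset V) ∈ E →
      u ≠ x → u ≠ c → u ≠ c' →
      (u ∈ f1 ∧ u ∈ f2) ∨ (u ∈ f1 ∧ u ∈ f3) ∨ (u ∈ f2 ∧ u ∈ f3) := by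
    intro c c' u hcx hc'x hcc' hcE hc'E hux huc huc'
    have hupair : u ∉ ({x, c} : Finset V) := by simp [hux, huc]
    have hupair' : u ∉ ({x, c'} : Finset V) := by simp [hux, huc']
    have hpairne : ({x, c} : Finset V) ≠ {x, c'} := by
      intro hh
      apply hcc'
      have : c ∈ ({x, c'} : Finset V) := by rw [← hh]; simp
      simp only [Finset.mem_insert, Finset.mem_singleton] at this
      rcases this with h | h
      exacts [absurd h hcx, h]
    have hxpairf : ∀ f : Finset V, x ∉ f → ∀ z : V, ({x, z} : Finset V) ≠ f := by
      intro f hxf z hh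
      exact hxf (hh ▸ (by simp : x ∈ ({x, z} : Finset V)))
    have key : ∀ (fa fb : Finset V), fa ∈ E → fb ∈ E → x ∉ fa → x ∉ fb → fa ≠ fb →
        u ∉ fa → u ∉ fb → False := by
      intro fa fb haE hbE hxa hxb hab hua hub
      exact no_four (hm u) ({x, c}) ({x, c'}) fa fb hcE hupair hc'E hupair'
        haE hua hbE hub hpairne (hxpairf fa hxa c) (hxpairf fb hxb c)
        (hxpairf fa hxa c') (hxpairf fb hxb c') hab
    rcases hcov u hux with h | h | h
    · by_cases h2 : u ∈ f2
      · exact Or.inl ⟨h, h2⟩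
      · by_cases h3 : u ∈ f3
        · exact Or.inr (Or.inl ⟨h, h3⟩)
        · exact absurd (key f2 f3 hf2E hf3E hxf2 hxf3 hd23 h2 h3) not_false
    · by_cases h1 : u ∈ f1
      · exact Or.inl ⟨h1, h⟩
      · by_cases h3 : u ∈ f3
        · exact Or.inr (Or.inr ⟨h, h3⟩)
        · exact absurd (key f1 f3 hf1E hf3E hxf1 hxf3 hd13 h1 h3) not_false
    · by_cases h1 : u ∈ f1
      · exact Or.inr (Or.inl ⟨h1, h⟩)
      · by_cases h2 : u ∈ f2
        · exact Or.inr (Or.inr ⟨h2, h⟩)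
        · exact absurd (key f1 f2 hf1E hf2E hxf1 hxf2 hd12 h1 h2) not_false
  have huniq : ∀ v : V, (v ∈ f1 ∧ v ∈ f2) ∨ (v ∈ f1 ∧ v ∈ f3) ∨ (v ∈ f2 ∧ v ∈ f3) →
      v = d0 := by
    intro v hv
    by_contra hne
    have hvx : v ≠ x := hdblx v hv
    have hxv : ({x, v} : Finset V) ∈ E := hall v hv
    obtain ⟨u, hus⟩ := exists_out ({x, v, d0} : Finset V)
      (lt_of_le_of_lt (card_le3' x v d0) (by omega))
    simp only [Finset.mem_insert, Finset.mem_singleton] at hus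
    push_neg at hus
    obtain ⟨hux, huv, hud0⟩ := hus
    have hu_dbl := hforce v d0 u hvx hd0x hne hxv hxd0 hux huv hud0
    have hxu : ({x, u} : Finset V) ∈ E := hall u hu_dbl
    obtain ⟨w, hws⟩ := exists_out ({x, v, d0, u} : Finset V)
      (lt_of_le_of_lt (card_le4' x v d0 u) (by omega))
    simp only [Finset.mem_insert, Finset.mem_singleton] at hws
    push_neg at hws
    obtain ⟨hwx, hwv, hwd0, hwu⟩ := hws
    have hwf : ∃ f : Finset V, f ∈ E ∧ x ∉ f ∧ w ∉ f := by
      rcases hni w hwx with h | h | h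
      exacts [⟨f1, hf1E, hxf1, h⟩, ⟨f2, hf2E, hxf2, h⟩, ⟨f3, hf3E, hxf3, h⟩]
    obtain ⟨f, hfE, hxf, hwf'⟩ := hwf
    have hpairne : ∀ (z z' : V), z ≠ x → z' ≠ x → z ≠ z' →
        ({x, z} : Finset V) ≠ ({x, z'} : Finset V) := by
      intro z z' hzx hz'x hzz' hh
      apply hzz'
      have : z ∈ ({x, z'} : Finset V) := by rw [← hh]; simp
      simp only [Finset.mem_insert, Finset.mem_singleton] at this
      rcases this with h | h
      exacts [absurd h hzx, h]
    have hxpairf : ∀ z : V, ({x, z} : Finset V) ≠ f := by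
      intro z hh
      exact hxf (hh ▸ (by simp : x ∈ ({x, z} : Finset V)))
    exact no_four (hm w) ({x, v}) ({x, d0}) ({x, u}) f
      hxv (by simp [hwx, hwv]) hxd0 (by simp [hwx, hwd0]) hxu (by simp [hwx, hwu]) hfE hwf'
      (hpairne v d0 hvx hd0x hne) (hpairne v u hvx hux (Ne.symm huv))
      (hxpairf v) (hpairne d0 u hd0x hux (Ne.symm hud0)) (hxpairf d0) (hxpairf u)
  have hEXC : ∀ s : V, s ≠ x → s ≠ d0 → ∀ g ∈ E, s ∉ g → x ∈ g →
      g = ({x, d0} : Finset V) := by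
    intro s hsx hsd0 g hg hsg hxg
    have hspair : s ∉ ({x, d0} : Finset V) := by simp [hsx, hsd0]
    have hnd : ∀ fa fb : Finset V, (s ∈ fa ∧ s ∈ fb) → fa = f1 ∧ fb = f2 ∨ True → True :=
      fun _ _ _ _ => trivial
    have hxpairf : ∀ (f : Finset V), x ∉ f → ({x, d0} : Finset V) ≠ f := by
      intro f hxf hh
      exact hxf (hh ▸ (by simp : x ∈ ({x, d0} : Finset V)))
    have main : ∀ fa fb : Finset V, fa ∈ E → fb ∈ E → x ∉ fa → x ∉ fb → fa ≠ fb →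
        s ∉ fa → s ∉ fb → g = ({x, d0} : Finset V) := by
      intro fa fb haE hbE hxa hxb hab hsa hsb
      have := exact_of_three (hm s) haE hsa hbE hsb hxd0 hspair hab
        (fun hh => hxa (hh.symm ▸ (by simp : x ∈ ({x, d0} : Finset V))))
        (fun hh => hxb (hh.symm ▸ (by simp : x ∈ ({x, d0} : Finset V))))
        g hg hsg
      rcases this with h | h | h
      · exact absurd (h ▸ hxg) hxa
      · exact absurd (h ▸ hxg) hxb
      · exact h
    rcases hcov s hsx with h | h | h
    · have h2 : s ∉ f2 := fun hc => hsd0 (huniq s (Or.inl ⟨h, hc⟩))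
      have h3 : s ∉ f3 := fun hc => hsd0 (huniq s (Or.inr (Or.inl ⟨h, hc⟩)))
      exact main f2 f3 hf2E hf3E hxf2 hxf3 hd23 h2 h3
    · have h1 : s ∉ f1 := fun hc => hsd0 (huniq s (Or.inl ⟨hc, h⟩))
      have h3 : s ∉ f3 := fun hc => hsd0 (huniq s (Or.inr (Or.inr ⟨h, hc⟩)))
      exact main f1 f3 hf1E hf3E hxf1 hxf3 hd13 h1 h3
    · have h1 : s ∉ f1 := fun hc => hsd0 (huniq s (Or.inr (Or.inl ⟨hc, h⟩)))
      have h2 : s ∉ f2 := fun hc => hsd0 (huniq s (Or.inr (Or.inr ⟨hc, h⟩)))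
      exact main f1 f2 hf1E hf2E hxf1 hxf2 hd12 h1 h2
  by_contra hno
  push_neg at hno
  have hyi : ∀ f : Finset V, f ∈ E → ∃ y ∈ f, y ≠ d0 := by
    intro f hfE
    obtain ⟨a, ha, b, hb, hab⟩ := Finset.one_lt_card.mp
      (show 1 < f.card from by have := hE2 f hfE; omega)
    by_cases h : a = d0
    · exact ⟨b, hb, fun hh => hab (h.trans hh.symm)⟩
    · exact ⟨a, ha, h⟩
  obtain ⟨y1, hy1, hy1d⟩ := hyi f1 hf1E
  obtain ⟨y2, hy2, hy2d⟩ := hyi f2 hf2E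
  obtain ⟨y3, hy3, hy3d⟩ := hyi f3 hf3E
  obtain ⟨m, hmE, hmsub⟩ : ∃ m ∈ E, m ⊆ ({x, y1, y2, y3} : Finset V) := by
    apply hno
    intro g hg
    by_cases hxg : x ∈ g
    · exact ⟨x, hxg, by simp⟩
    · rcases hmem g hg hxg with h | h | h <;> rw [h]
      exacts [⟨y1, hy1, by simp⟩, ⟨y2, hy2, by simp⟩, ⟨y3, hy3, by simp⟩]
  have hxm : x ∈ m := by
    by_contra hxm
    have hsmall : ∀ (f : Finset V) (za zb : V), f ∈ E → x ∉ f → za ∉ f → zb ∉ f →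
        (∀ t ∈ f, t = x ∨ t = y1 ∨ t = y2 ∨ t = y3) →
        ((y1 ∉ f ∧ y2 ∉ f) ∨ (y1 ∉ f ∧ y3 ∉ f) ∨ (y2 ∉ f ∧ y3 ∉ f)) → False := by
      intro f za zb hfE hxf hza hzb hsub hcase
      have hcard := hE2 f hfE
      have : ∃ w : V, f ⊆ {w} := by
        rcases hcase with ⟨n1, n2⟩ | ⟨n1, n2⟩ | ⟨n1, n2⟩
        · exact ⟨y3, fun t ht => by
            rcases hsub t ht with h | h | h | h
            · exact absurd (h ▸ ht) hxf
            · exact absurd (h ▸ ht) n1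
            · exact absurd (h ▸ ht) n2
            · simp [h]⟩
        · exact ⟨y2, fun t ht => by
            rcases hsub t ht with h | h | h | h
            · exact absurd (h ▸ ht) hxf
            · exact absurd (h ▸ ht) n1
            · simp [h]
            · exact absurd (h ▸ ht) n2⟩
        · exact ⟨y1, fun t ht => by
            rcases hsub t ht with h | h | h | h
            · exact absurd (h ▸ ht) hxf
            · simp [h]
            · exact absurd (h ▸ ht) n1
            · exact absurd (h ▸ ht) n2⟩
      obtain ⟨w, hw⟩ := this
      have := Finset.card_le_card hw
      simp at this; omega
    have hsub' : ∀ t ∈ m, t = x ∨ t = y1 ∨ t = y2 ∨ t = y3 := by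
      intro t ht
      have := hmsub ht
      simp only [Finset.mem_insert, Finset.mem_singleton] at this
      exact this
    have hy2f1 : y2 ∉ f1 := fun hc => hy2d (huniq y2 (Or.inl ⟨hc, hy2⟩))
    have hy3f1 : y3 ∉ f1 := fun hc => hy3d (huniq y3 (Or.inr (Or.inl ⟨hc, hy3⟩)))
    have hy1f2 : y1 ∉ f2 := fun hc => hy1d (huniq y1 (Or.inl ⟨hy1, hc⟩))
    have hy3f2 : y3 ∉ f2 := fun hc => hy3d (huniq y3 (Or.inr (Or.inr ⟨hc, hy3⟩)))
    have hy1f3 : y1 ∉ f3 := fun hc => hy1d (huniq y1 (Or.inr (Or.inl ⟨hy1, hc⟩)))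
    have hy2f3 : y2 ∉ f3 := fun hc => hy2d (huniq y2 (Or.inr (Or.inr ⟨hy2, hc⟩)))
    rcases hmem m hmE hxm with h | h | h <;> rw [h] at hmsub hsub'
    · exact hsmall f1 y2 y3 hf1E hxf1 hy2f1 hy3f1 hsub' (Or.inr (Or.inr ⟨hy2f1, hy3f1⟩))
    · exact hsmall f2 y1 y3 hf2E hxf2 hy1f2 hy3f2 hsub' (Or.inr (Or.inl ⟨hy1f2, hy3f2⟩))
    · exact hsmall f3 y1 y2 hf3E hxf3 hy1f3 hy2f3 hsub' (Or.inl ⟨hy1f3, hy2f3⟩)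
  obtain ⟨t, hts⟩ := exists_out ({x, y1, y2, y3, d0} : Finset V)
    (lt_of_le_of_lt (card_le5' x y1 y2 y3 d0) (by omega))
  simp only [Finset.mem_insert, Finset.mem_singleton] at hts
  push_neg at hts
  obtain ⟨htx, hty1, hty2, hty3, htd0⟩ := hts
  have htm : t ∉ m := by
    intro hh
    have := hmsub hh
    simp only [Finset.mem_insert, Finset.mem_singleton] at this
    tauto
  have hmval : m = ({x, d0} : Finset V) := hEXC t htx htd0 m hmE htm hxm
  have : d0 ∈ m := by rw [hmval]; simp
  have := hmsub this
  simp only [Finset.mem_insert, Finset.mem_singleton] at this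
  rcases this with h | h | h | h
  exacts [hd0x h, hy1d h.symm, hy2d h.symm, hy3d h.symm]

theorem caseIII_goodA
    (hn : 6 ≤ Fintype.card V)
    (hm : ∀ v : V, Multiset.card (miss E v) = 3)
    (hE2 : ∀ e ∈ E, 2 ≤ e.card)
    (x v : V) (f1 f2 f3 : Finset V)
    (hf1E : f1 ∈ E) (hf2E : f2 ∈ E) (hf3E : f3 ∈ E)
    (hxf1 : x ∉ f1) (hxf2 : x ∉ f2) (hxf3 : x ∉ f3)
    (hmem : ∀ g ∈ E, x ∉ g → g = f1 ∨ g = f2 ∨ g = f3)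
    (hcov : ∀ u : V, u ≠ x → u ∈ f1 ∨ u ∈ f2 ∨ u ∈ f3)
    (hd12 : f1 ≠ f2) (hd13 : f1 ≠ f3) (hd23 : f2 ≠ f3)
    (hv1 : v ∈ f1) (hv2 : v ∈ f2) (hv3 : v ∉ f3)
    (hxv : ({x, v} : Finset V) ∉ E)
    (hblock : ∀ v' w : V, ((v' ∈ f1 ∧ v' ∈ f2 ∧ w ∈ f3) ∨ (v' ∈ f1 ∧ v' ∈ f3 ∧ w ∈ f2) ∨
      (v' ∈ f2 ∧ v' ∈ f3 ∧ w ∈ f1)) → ∃ m ∈ E, m ⊆ ({x, v', w} : Finset V))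
    (z0 : V) (hz0x : z0 ≠ x) (hz02 : z0 ∈ f2) (hz01 : z0 ∉ f1) (hz03 : z0 ∉ f3) : False := by
  classical
  have hvx : v ≠ x := fun h => hxf1 (h ▸ hv1)
  have hz0v : z0 ≠ v := fun h => hz01 (h ▸ hv1)
  -- blockers over f3 contain their w
  have hwm : ∀ (w : V) (m : Finset V), w ∈ f3 → m ∈ E → m ⊆ ({x, v, w} : Finset V) →
      w ∈ m := by
    intro w m hw hmE hsub
    by_contra hwm'
    have hsub2 : m ⊆ ({x, v} : Finset V) := by
      intro t ht
      have := hsub ht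
      simp only [Finset.mem_insert, Finset.mem_singleton] at this ⊢
      rcases this with h | h | h
      · exact Or.inl h
      · exact Or.inr h
      · exact absurd (h ▸ ht) hwm'
    exact hxv ((eq_pair (hE2 m hmE) hsub2) ▸ hmE)
  -- z0 exactness
  obtain ⟨h0, ⟨h0E, h0z⟩, hP0⟩ := third (hm z0) hf1E hz01 hf3E hz03 hd13
  -- blockers over f3 are f1-delta or h0
  have hmw_class : ∀ (w : V) (m : Finset V), w ∈ f3 → m ∈ E →
      m ⊆ ({x, v, w} : Finset V) → (m = f1 ∧ f1 = {v, w}) ∨ m = h0 := by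
    intro w m hw hmE hsub
    have hz0m : z0 ∉ m := by
      intro hh
      have := hsub hh
      simp only [Finset.mem_insert, Finset.mem_singleton] at this
      rcases this with h | h | h
      exacts [hz0x h, hz0v h, hz03 (h ▸ hw)]
    rcases hP0 m hmE hz0m with h | h | h
    · left
      refine ⟨h, ?_⟩
      have hsubf1 : f1 ⊆ ({x, v, w} : Finset V) := by rw [← h]; exact hsub
      apply eq_pair (hE2 f1 hf1E)
      intro t ht
      have := hsubf1 ht
      simp only [Finset.mem_insert, Finset.mem_singleton] at this ⊢
      rcases this with h' | h' | h'
      · exact absurd (h' ▸ ht) hxf1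
      · exact Or.inl h'
      · exact Or.inr h'
    · exfalso
      have hsubf3 : f3 ⊆ ({x, v, w} : Finset V) := by rw [← h]; exact hsub
      obtain ⟨a, ha, b, hb, hab⟩ := Finset.one_lt_card.mp
        (show 1 < f3.card from by have := hE2 f3 hf3E; omega)
      have hone : ∀ t ∈ f3, t = w := by
        intro t ht
        have := hsubf3 ht
        simp only [Finset.mem_insert, Finset.mem_singleton] at this
        rcases this with h' | h' | h'
        · exact absurd (h' ▸ ht) hxf3
        · exact absurd (h' ▸ ht) hv3
        · exact h'
      exact hab ((hone a ha).trans (hone b hb).symm)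
    · exact Or.inr h
  -- two elements of f3
  obtain ⟨t, ht, s, hs, hts⟩ := Finset.one_lt_card.mp
    (show 1 < f3.card from by have := hE2 f3 hf3E; omega)
  obtain ⟨mt, hmtE, hmtsub⟩ := hblock v t (Or.inl ⟨hv1, hv2, ht⟩)
  obtain ⟨ms, hmsE, hmssub⟩ := hblock v s (Or.inl ⟨hv1, hv2, hs⟩)
  have htmt : t ∈ mt := hwm t mt ht hmtE hmtsub
  have hsms : s ∈ ms := hwm s ms hs hmsE hmssub
  have htx : t ≠ x := fun h => hxf3 (h ▸ ht)
  have hsx : s ≠ x := fun h => hxf3 (h ▸ hs)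
  have htv : t ≠ v := fun h => hv3 (h ▸ ht)
  have hsv : s ≠ v := fun h => hv3 (h ▸ hs)
  have hmts : mt ≠ ms := by
    intro hh
    have : t ∈ ms := hh ▸ htmt
    have := hmssub this
    simp only [Finset.mem_insert, Finset.mem_singleton] at this
    rcases this with h | h | h
    exacts [htx h, htv h, hts h]
  -- get the delta and the h0 elements
  obtain ⟨wa, wb, hwa, hwb, hwab, hf1eq, hmbval, hmbsub⟩ :
      ∃ wa wb : V, wa ∈ f3 ∧ wb ∈ f3 ∧ wa ≠ wb ∧ f1 = {v, wa} ∧ wb ∈ h0 ∧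
        h0 ⊆ ({x, v, wb} : Finset V) := by
    rcases hmw_class t mt ht hmtE hmtsub with ⟨he, hf⟩ | he <;>
      rcases hmw_class s ms hs hmsE hmssub with ⟨he', hf'⟩ | he'
    · exfalso
      have : s ∈ ({v, t} : Finset V) := by rw [← hf, hf']; simp
      simp only [Finset.mem_insert, Finset.mem_singleton] at this
      rcases this with h | h
      exacts [hsv h, hts h.symm]
    · exact ⟨t, s, ht, hs, hts, hf, he' ▸ hsms, he' ▸ hmssub⟩
    · exact ⟨s, t, hs, ht, Ne.symm hts, hf', he ▸ htmt, he ▸ hmtsub⟩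
    · exact absurd (he.trans he'.symm) hmts
  -- every element of f3 is wa or wb
  have hf3all : ∀ w ∈ f3, w = wa ∨ w = wb := by
    intro w hw
    obtain ⟨mw, hmwE, hmwsub⟩ := hblock v w (Or.inl ⟨hv1, hv2, hw⟩)
    have hwmw := hwm w mw hw hmwE hmwsub
    rcases hmw_class w mw hw hmwE hmwsub with ⟨he, hf⟩ | he
    · left
      have : wa ∈ ({v, w} : Finset V) := by rw [← hf, hf1eq]; simp
      simp only [Finset.mem_insert, Finset.mem_singleton] at this
      rcases this with h | h
      · exact absurd (h ▸ hwa) hv3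
      · exact h.symm
    · right
      have : w ∈ ({x, v, wb} : Finset V) := hmbsub (he ▸ hwmw)
      simp only [Finset.mem_insert, Finset.mem_singleton] at this
      rcases this with h | h | h
      · exact absurd (h ▸ hw) hxf3
      · exact absurd (h ▸ hw) hv3
      · exact h
  -- z1: second f2-single
  obtain ⟨z1, hz1s⟩ := exists_out ({x, v, wa, wb, z0} : Finset V)
    (lt_of_le_of_lt (card_le5' x v wa wb z0) (by omega))
  simp only [Finset.mem_insert, Finset.mem_singleton] at hz1s
  push_neg at hz1s
  obtain ⟨hz1x, hz1v, hz1wa, hz1wb, hz1z0⟩ := hz1s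
  have hz13 : z1 ∉ f3 := by
    intro hh
    rcases hf3all z1 hh with h | h
    exacts [hz1wa h, hz1wb h]
  have hz11 : z1 ∉ f1 := by
    rw [hf1eq]
    simp [hz1v, hz1wa]
  have hz12 : z1 ∈ f2 := by
    rcases hcov z1 hz1x with h | h | h
    exacts [absurd h hz11, h, absurd h hz13]
  -- wa is in f1 and f3
  have hwaf1 : wa ∈ f1 := by rw [hf1eq]; simp
  -- the pair (wa, z1)
  obtain ⟨m', hm'E, hm'sub⟩ := hblock wa z1 (Or.inr (Or.inl ⟨hwaf1, hwa, hz12⟩))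
  have hz0m' : z0 ∉ m' := by
    intro hh
    have := hm'sub hh
    simp only [Finset.mem_insert, Finset.mem_singleton] at this
    rcases this with h | h | h
    exacts [hz0x h, hz03 (h ▸ hwa), hz1z0 h.symm]
  rcases hP0 m' hm'E hz0m' with h | h | h
  · -- m' = f1 = {v, wa} contains v
    have : v ∈ m' := by rw [h, hf1eq]; simp
    have := hm'sub this
    simp only [Finset.mem_insert, Finset.mem_singleton] at this
    rcases this with h' | h' | h'
    exacts [hvx h', hv3 (h' ▸ hwa), hz11 (h' ▸ hv1)]
  · -- m' = f3 contains wb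
    have hwbm : wb ∈ m' := h ▸ hwb
    have := hm'sub hwbm
    simp only [Finset.mem_insert, Finset.mem_singleton] at this
    rcases this with h' | h' | h'
    exacts [hxf3 (h' ▸ hwb), hwab h'.symm, hz1wb h'.symm]
  · -- m' = h0 contains wb
    have hwbm : wb ∈ m' := h ▸ hmbval
    have := hm'sub hwbm
    simp only [Finset.mem_insert, Finset.mem_singleton] at this
    rcases this with h' | h' | h'
    exacts [hxf3 (h' ▸ hwb), hwab h'.symm, hz1wb h'.symm]


theorem caseIII_good
    (hn : 6 ≤ Fintype.card V)
    (hm : ∀ v : V, Multiset.card (miss E v) = 3)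
    (hE2 : ∀ e ∈ E, 2 ≤ e.card)
    (hTri : ¬ ∃ a b c : V, a ≠ b ∧ a ≠ c ∧ b ≠ c ∧
      ({a, b} : Finset V) ∈ E ∧ ({a, c} : Finset V) ∈ E ∧ ({b, c} : Finset V) ∈ E)
    (x v : V) (f1 f2 f3 : Finset V) (hdc : miss E x = {f1, f2, f3})
    (hni : ∀ u : V, u ≠ x → u ∉ f1 ∨ u ∉ f2 ∨ u ∉ f3)
    (hcov : ∀ u : V, u ≠ x → u ∈ f1 ∨ u ∈ f2 ∨ u ∈ f3)
    (hd12 : f1 ≠ f2) (hd13 : f1 ≠ f3) (hd23 : f2 ≠ f3)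
    (hv1 : v ∈ f1) (hv2 : v ∈ f2)
    (hxv : ({x, v} : Finset V) ∉ E) :
    ∃ S : Finset V, (∀ g ∈ E, ∃ w ∈ g, w ∈ S) ∧ (∀ g ∈ E, ¬ g ⊆ S) := by
  classical
  obtain ⟨hf1E, hxf1⟩ := decomp_mem1 hdc
  obtain ⟨hf2E, hxf2⟩ := decomp_mem2 hdc
  obtain ⟨hf3E, hxf3⟩ := decomp_mem3 hdc
  have hmem := exact3 hdc
  have hvx : v ≠ x := fun h => hxf1 (h ▸ hv1)
  have hv3 : v ∉ f3 := by
    rcases hni v hvx with h | h | h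
    exacts [absurd hv1 h, absurd hv2 h, h]
  by_contra hno
  push_neg at hno
  have hblock : ∀ v' w : V, ((v' ∈ f1 ∧ v' ∈ f2 ∧ w ∈ f3) ∨ (v' ∈ f1 ∧ v' ∈ f3 ∧ w ∈ f2) ∨
      (v' ∈ f2 ∧ v' ∈ f3 ∧ w ∈ f1)) → ∃ m ∈ E, m ⊆ ({x, v', w} : Finset V) := by
    intro v' w hc
    apply hno
    intro g hg
    by_cases hxg : x ∈ g
    · exact ⟨x, hxg, by simp⟩
    · rcases hmem g hg hxg with h | h | h <;> rw [h] <;>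
        rcases hc with ⟨c1, c2, c3⟩ | ⟨c1, c2, c3⟩ | ⟨c1, c2, c3⟩
      · exact ⟨v', c1, by simp⟩
      · exact ⟨v', c1, by simp⟩
      · exact ⟨w, c3, by simp⟩
      · exact ⟨v', c2, by simp⟩
      · exact ⟨w, c3, by simp⟩
      · exact ⟨v', c1, by simp⟩
      · exact ⟨w, c3, by simp⟩
      · exact ⟨v', c2, by simp⟩
      · exact ⟨v', c2, by simp⟩
  have hwm : ∀ (w : V) (m : Finset V), m ∈ E → m ⊆ ({x, v, w} : Finset V) → w ∈ m := by
    intro w m hmE hsub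
    by_contra hwm'
    have hsub2 : m ⊆ ({x, v} : Finset V) := by
      intro t ht
      have := hsub ht
      simp only [Finset.mem_insert, Finset.mem_singleton] at this ⊢
      rcases this with h | h | h
      · exact Or.inl h
      · exact Or.inr h
      · exact absurd (h ▸ ht) hwm'
    exact hxv ((eq_pair (hE2 m hmE) hsub2) ▸ hmE)
  by_cases hsing : ∃ z : V, z ≠ x ∧ z ∉ f3 ∧ ¬(z ∈ f1 ∧ z ∈ f2)
  · obtain ⟨z0, hz0x, hz03, hz0nd⟩ := hsing
    rcases hcov z0 hz0x with h | h | h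
    · have hz02 : z0 ∉ f2 := fun hc => hz0nd ⟨h, hc⟩
      exact (caseIII_goodA hn hm hE2 x v f2 f1 f3 hf2E hf1E hf3E hxf2 hxf1 hxf3
        (fun g hg hx => by rcases hmem g hg hx with h' | h' | h' <;> tauto)
        (fun u hux => by rcases hcov u hux with h' | h' | h' <;> tauto)
        (Ne.symm hd12) hd23 hd13 hv2 hv1 hv3 hxv
        (fun v' w hc => hblock v' w (by tauto))
        z0 hz0x h hz02 hz03).elim
    · have hz01 : z0 ∉ f1 := fun hc => hz0nd ⟨hc, h⟩
      exact (caseIII_goodA hn hm hE2 x v f1 f2 f3 hf1E hf2E hf3E hxf1 hxf2 hxf3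
        hmem hcov hd12 hd13 hd23 hv1 hv2 hv3 hxv hblock
        z0 hz0x h hz01 hz03).elim
    · exact absurd h hz03
  · push_neg at hsing
    by_cases hout : ∃ z : V, z ≠ x ∧ z ≠ v ∧ z ∉ f3
    · -- B1
      obtain ⟨z, hzx, hzv, hz3⟩ := hout
      obtain ⟨hz1, hz2⟩ := hsing z hzx hz3
      have hxmem : ∀ (w : V) (m : Finset V), w ∈ f3 → m ∈ E →
          m ⊆ ({x, v, w} : Finset V) → x ∈ m := by
        intro w m hw hmE hsub
        by_contra hxm
        rcases hmem m hmE hxm with h | h | h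
        · have := hsub (h ▸ hz1)
          simp only [Finset.mem_insert, Finset.mem_singleton] at this
          rcases this with h' | h' | h'
          exacts [hzx h', hzv h', hz3 (h' ▸ hw)]
        · have := hsub (h ▸ hz2)
          simp only [Finset.mem_insert, Finset.mem_singleton] at this
          rcases this with h' | h' | h'
          exacts [hzx h', hzv h', hz3 (h' ▸ hw)]
        · obtain ⟨a, ha, b, hb, hab⟩ := Finset.one_lt_card.mp
            (show 1 < f3.card from by have := hE2 f3 hf3E; omega)
          have hone : ∀ t ∈ f3, t = w := by
            intro t ht
            have := hsub (h ▸ ht)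
            simp only [Finset.mem_insert, Finset.mem_singleton] at this
            rcases this with h' | h' | h'
            · exact absurd (h' ▸ ht) hxf3
            · exact absurd (h' ▸ ht) hv3
            · exact h'
          exact hab ((hone a ha).trans (hone b hb).symm)
      have hdm : ∀ (w w' : V) (m m' : Finset V), w ≠ w' → m ∈ E →
          m ⊆ ({x, v, w} : Finset V) → m' ⊆ ({x, v, w'} : Finset V) → m = m' → False := by
        intro w w' m m' hww' hmE hsub hsub' he
        have hsub2 : m ⊆ ({x, v} : Finset V) := by
          intro t ht
          have h1 := hsub ht
          have h2 := hsub' (he ▸ ht)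
          simp only [Finset.mem_insert, Finset.mem_singleton] at h1 h2 ⊢
          rcases h1 with h | h | h
          · exact Or.inl h
          · exact Or.inr h
          · rcases h2 with h' | h' | h'
            · exact Or.inl (h ▸ h')
            · exact Or.inr (h ▸ h')
            · exact absurd (h.symm.trans h') hww'
        exact hxv ((eq_pair (hE2 m hmE) hsub2) ▸ hmE)
      obtain ⟨w1, hw1, w2, hw2, hw12⟩ := Finset.one_lt_card.mp
        (show 1 < f3.card from by have := hE2 f3 hf3E; omega)
      obtain ⟨m1, hm1E, hm1sub⟩ := hblock v w1 (Or.inl ⟨hv1, hv2, hw1⟩)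
      obtain ⟨m2, hm2E, hm2sub⟩ := hblock v w2 (Or.inl ⟨hv1, hv2, hw2⟩)
      have hx1 : x ∈ m1 := hxmem w1 m1 hw1 hm1E hm1sub
      have hx2 : x ∈ m2 := hxmem w2 m2 hw2 hm2E hm2sub
      have hm12 : m1 ≠ m2 := fun he => hdm w1 w2 m1 m2 hw12 hm1E hm1sub hm2sub he
      have hw1x : w1 ≠ x := fun h => hxf3 (h ▸ hw1)
      have hw2x : w2 ≠ x := fun h => hxf3 (h ▸ hw2)
      have hw1v : w1 ≠ v := fun h => hv3 (h ▸ hw1)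
      have hw2v : w2 ≠ v := fun h => hv3 (h ▸ hw2)
      have hzm : ∀ (w : V) (m : Finset V), w ∈ f3 → m ⊆ ({x, v, w} : Finset V) → z ∉ m := by
        intro w m hw hsub hh
        have := hsub hh
        simp only [Finset.mem_insert, Finset.mem_singleton] at this
        rcases this with h | h | h
        exacts [hzx h, hzv h, hz3 (h ▸ hw)]
      have hf3m : ∀ (m : Finset V), x ∈ m → f3 ≠ m := fun m hx h => hxf3 (h ▸ hx)
      have hf3all : ∀ w ∈ f3, w = w1 ∨ w = w2 := by
        intro w hw
        by_contra hcon
        push_neg at hcon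
        obtain ⟨m3, hm3E, hm3sub⟩ := hblock v w (Or.inl ⟨hv1, hv2, hw⟩)
        exact no_four (hm z) f3 m1 m2 m3 hf3E hz3 hm1E (hzm w1 m1 hw1 hm1sub)
          hm2E (hzm w2 m2 hw2 hm2sub) hm3E (hzm w m3 hw hm3sub)
          (hf3m m1 hx1) (hf3m m2 hx2) (hf3m m3 (hxmem w m3 hw hm3E hm3sub))
          hm12 (fun he => hdm w1 w m1 m3 (fun hh => hcon.1 hh.symm) hm1E hm1sub hm3sub he)
          (fun he => hdm w2 w m2 m3 (fun hh => hcon.2 hh.symm) hm2E hm2sub hm3sub he)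
      have hf3eq : f3 = {w1, w2} := eq_pair_of_two hw1 hw2 hw12 hf3all
      have hPz := exact_of_three (hm z) hf3E hz3 hm1E (hzm w1 m1 hw1 hm1sub)
        hm2E (hzm w2 m2 hw2 hm2sub) (hf3m m1 hx1) (hf3m m2 hx2) hm12
      obtain ⟨z', hz's⟩ := exists_out ({x, v, w1, w2, z} : Finset V)
        (lt_of_le_of_lt (card_le5' x v w1 w2 z) (by omega))
      simp only [Finset.mem_insert, Finset.mem_singleton] at hz's
      push_neg at hz's
      obtain ⟨hz'x, hz'v, hz'w1, hz'w2, hz'z⟩ := hz's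
      have hz'3 : z' ∉ f3 := by
        intro hh
        rcases hf3all z' hh with h | h
        exacts [hz'w1 h, hz'w2 h]
      obtain ⟨hz'1, hz'2⟩ := hsing z' hz'x hz'3
      have hz'm : ∀ (w : V) (m : Finset V), w ∈ f3 → m ⊆ ({x, v, w} : Finset V) → z' ∉ m := by
        intro w m hw hsub hh
        have := hsub hh
        simp only [Finset.mem_insert, Finset.mem_singleton] at this
        rcases this with h | h | h
        exacts [hz'x h, hz'v h, hz'3 (h ▸ hw)]
      have hPz' := exact_of_three (hm z') hf3E hz'3 hm1E (hz'm w1 m1 hw1 hm1sub)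
        hm2E (hz'm w2 m2 hw2 hm2sub) (hf3m m1 hx1) (hf3m m2 hx2) hm12
      have hw1m1 : w1 ∈ m1 := hwm w1 m1 hm1E hm1sub
      have hw2m2 : w2 ∈ m2 := hwm w2 m2 hm2E hm2sub
      by_cases hvm1 : v ∈ m1
      · obtain ⟨m', hm'E, hm'sub⟩ := hblock z w1 (Or.inl ⟨hz1, hz2, hw1⟩)
        have hz'm' : z' ∉ m' := by
          intro hh
          have := hm'sub hh
          simp only [Finset.mem_insert, Finset.mem_singleton] at this
          rcases this with h | h | h
          exacts [hz'x h, hz'z h, hz'w1 h]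
        rcases hPz' m' hm'E hz'm' with h | h | h
        · have : w2 ∈ m' := by rw [h, hf3eq]; simp
          have := hm'sub this
          simp only [Finset.mem_insert, Finset.mem_singleton] at this
          rcases this with h' | h' | h'
          exacts [hw2x h', hz3 (h' ▸ hw2), hw12 h'.symm]
        · have : v ∈ m' := h ▸ hvm1
          have := hm'sub this
          simp only [Finset.mem_insert, Finset.mem_singleton] at this
          rcases this with h' | h' | h'
          exacts [hvx h', hzv h'.symm, hw1v h'.symm]
        · have : w2 ∈ m' := h ▸ hw2m2
          have := hm'sub this
          simp only [Finset.mem_insert, Finset.mem_singleton] at this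
          rcases this with h' | h' | h'
          exacts [hw2x h', hz3 (h' ▸ hw2), hw12 h'.symm]
      · by_cases hvm2 : v ∈ m2
        · obtain ⟨m', hm'E, hm'sub⟩ := hblock z w2 (Or.inl ⟨hz1, hz2, hw2⟩)
          have hz'm' : z' ∉ m' := by
            intro hh
            have := hm'sub hh
            simp only [Finset.mem_insert, Finset.mem_singleton] at this
            rcases this with h | h | h
            exacts [hz'x h, hz'z h, hz'w2 h]
          rcases hPz' m' hm'E hz'm' with h | h | h
          · have : w1 ∈ m' := by rw [h, hf3eq]; simp
            have := hm'sub this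
            simp only [Finset.mem_insert, Finset.mem_singleton] at this
            rcases this with h' | h' | h'
            exacts [hw1x h', hz3 (h' ▸ hw1), hw12 h']
          · have : w1 ∈ m' := h ▸ hw1m1
            have := hm'sub this
            simp only [Finset.mem_insert, Finset.mem_singleton] at this
            rcases this with h' | h' | h'
            exacts [hw1x h', hz3 (h' ▸ hw1), hw12 h']
          · have : v ∈ m' := h ▸ hvm2
            have := hm'sub this
            simp only [Finset.mem_insert, Finset.mem_singleton] at this
            rcases this with h' | h' | h'
            exacts [hvx h', hzv h'.symm, hw2v h'.symm]
        · have hm1eq : m1 = ({x, w1} : Finset V) := by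
            apply eq_pair (hE2 m1 hm1E)
            intro t ht
            have := hm1sub ht
            simp only [Finset.mem_insert, Finset.mem_singleton] at this ⊢
            rcases this with h | h | h
            · exact Or.inl h
            · exact absurd (h ▸ ht) hvm1
            · exact Or.inr h
          have hm2eq : m2 = ({x, w2} : Finset V) := by
            apply eq_pair (hE2 m2 hm2E)
            intro t ht
            have := hm2sub ht
            simp only [Finset.mem_insert, Finset.mem_singleton] at this ⊢
            rcases this with h | h | h
            · exact Or.inl h
            · exact absurd (h ▸ ht) hvm2
            · exact Or.inr h
          exact hTri ⟨x, w1, w2, Ne.symm hw1x, Ne.symm hw2x, hw12,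
            hm1eq ▸ hm1E, hm2eq ▸ hm2E, hf3eq ▸ hf3E⟩
    · -- B2
      push_neg at hout
      have hf3card : 4 ≤ f3.card := by
        have hsub : Finset.univ \ ({x, v} : Finset V) ⊆ f3 := by
          intro t ht
          rw [Finset.mem_sdiff] at ht
          simp only [Finset.mem_insert, Finset.mem_singleton] at ht
          push_neg at ht
          exact hout t ht.2.1 ht.2.2
        have h1 := Finset.card_le_card hsub
        rw [Finset.card_sdiff_of_subset (Finset.subset_univ _), Finset.card_univ] at h1
        have h2 : ({x, v} : Finset V).card ≤ 2 := (Finset.card_insert_le _ _).trans (by simp)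
        omega
      have hgetm : ∀ w : V, w ∈ f3 → ∃ m, m ∈ E ∧ m ⊆ ({x, v, w} : Finset V) ∧ w ∈ m ∧
          (x ∈ m ∨ f1 = {v, w} ∨ f2 = {v, w}) := by
        intro w hw
        obtain ⟨m, hmE, hmsub⟩ := hblock v w (Or.inl ⟨hv1, hv2, hw⟩)
        refine ⟨m, hmE, hmsub, hwm w m hmE hmsub, ?_⟩
        by_cases hxm : x ∈ m
        · exact Or.inl hxm
        · have hpair : ∀ f : Finset V, f = m → x ∉ f → f = {v, w} := by
            intro f hf hxf
            apply eq_pair (hE2 f (hf ▸ hmE))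
            intro t ht
            have := hmsub (hf ▸ ht)
            simp only [Finset.mem_insert, Finset.mem_singleton] at this ⊢
            rcases this with h | h | h
            · exact absurd (h ▸ ht) hxf
            · exact Or.inl h
            · exact Or.inr h
          rcases hmem m hmE hxm with h | h | h
          · exact Or.inr (Or.inl (hpair f1 h.symm hxf1))
          · exact Or.inr (Or.inr (hpair f2 h.symm hxf2))
          · exfalso
            obtain ⟨a, b, c, ha, hb, hc, hab, hac, hbc⟩ := three_of_card
              (show 3 ≤ f3.card from by omega)
            have hone : ∀ t ∈ f3, t = w := by
              intro t ht
              have := hmsub (h ▸ ht)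
              simp only [Finset.mem_insert, Finset.mem_singleton] at this
              rcases this with h' | h' | h'
              · exact absurd (h' ▸ ht) hxf3
              · exact absurd (h' ▸ ht) hv3
              · exact h'
            exact hab ((hone a ha).trans (hone b hb).symm)
      -- helper: a pinned delta can only happen once
      have hpin : ∀ (f : Finset V) (a b : V), a ∈ f3 → b ∈ f3 → f = {v, a} → f = {v, b} →
          a = b := by
        intro f a b ha hb h1 h2
        have : b ∈ ({v, a} : Finset V) := by rw [← h1, h2]; simp
        simp only [Finset.mem_insert, Finset.mem_singleton] at this
        rcases this with h | h
        · exact absurd (h ▸ hb) hv3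
        · exact h.symm
      -- main flow given two x-type blockers
      have main : ∀ wa wb wc wd : V, wa ∈ f3 → wb ∈ f3 → wc ∈ f3 → wd ∈ f3 →
          wa ≠ wb → wa ≠ wc → wa ≠ wd → wb ≠ wc → wb ≠ wd → wc ≠ wd →
          ∀ ma mb : Finset V, ma ∈ E → mb ∈ E → ma ⊆ ({x, v, wa} : Finset V) →
          mb ⊆ ({x, v, wb} : Finset V) → wa ∈ ma → wb ∈ mb → x ∈ ma → x ∈ mb → False := by
        intro wa wb wc wd hwa hwb hwc hwd hab hac had hbc hbd hcd
          ma mb hmaE hmbE hmasub hmbsub hwama hwbmb hxma hxmb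
        have hwax : wa ≠ x := fun h => hxf3 (h ▸ hwa)
        have hwbx : wb ≠ x := fun h => hxf3 (h ▸ hwb)
        have hwcx : wc ≠ x := fun h => hxf3 (h ▸ hwc)
        have hwdx : wd ≠ x := fun h => hxf3 (h ▸ hwd)
        have hwav : wa ≠ v := fun h => hv3 (h ▸ hwa)
        have hwbv : wb ≠ v := fun h => hv3 (h ▸ hwb)
        have hwcv : wc ≠ v := fun h => hv3 (h ▸ hwc)
        have hwdv : wd ≠ v := fun h => hv3 (h ▸ hwd)
        have hmamb : ma ≠ mb := by
          intro he
          have : wa ∈ mb := he ▸ hwama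
          have := hmbsub this
          simp only [Finset.mem_insert, Finset.mem_singleton] at this
          rcases this with h | h | h
          exacts [hwax h, hwav h, hab h]
        have hnotin : ∀ (u : V) (m : Finset V) (w : V), m ⊆ ({x, v, w} : Finset V) →
            u ≠ x → u ≠ v → u ≠ w → u ∉ m := by
          intro u m w hsub hux huv huw hh
          have := hsub hh
          simp only [Finset.mem_insert, Finset.mem_singleton] at this
          rcases this with h | h | h
          exacts [hux h, huv h, huw h]
        -- the set missed by wd among f1, f2
        obtain ⟨fd, hfdE, hxfd, hwdfd, hfdor⟩ :
            ∃ fd, fd ∈ E ∧ x ∉ fd ∧ wd ∉ fd ∧ (fd = f1 ∨ fd = f2) := by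
          rcases hni wd hwdx with h | h | h
          · exact ⟨f1, hf1E, hxf1, h, Or.inl rfl⟩
          · exact ⟨f2, hf2E, hxf2, h, Or.inr rfl⟩
          · exact absurd hwd h
        obtain ⟨fc, hfcE, hxfc, hwcfc, hfcor⟩ :
            ∃ fc, fc ∈ E ∧ x ∉ fc ∧ wc ∉ fc ∧ (fc = f1 ∨ fc = f2) := by
          rcases hni wc hwcx with h | h | h
          · exact ⟨f1, hf1E, hxf1, h, Or.inl rfl⟩
          · exact ⟨f2, hf2E, hxf2, h, Or.inr rfl⟩
          · exact absurd hwc h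
        have hfdma : fd ≠ ma := fun h => hxfd (h ▸ hxma)
        have hfdmb : fd ≠ mb := fun h => hxfd (h ▸ hxmb)
        have hfcma : fc ≠ ma := fun h => hxfc (h ▸ hxma)
        have hfcmb : fc ≠ mb := fun h => hxfc (h ▸ hxmb)
        have hPd := exact_of_three (hm wd) hfdE hwdfd hmaE
          (hnotin wd ma wa hmasub hwdx hwdv (Ne.symm had))
          hmbE (hnotin wd mb wb hmbsub hwdx hwdv (Ne.symm hbd)) hfdma hfdmb hmamb
        have hPc := exact_of_three (hm wc) hfcE hwcfc hmaE
          (hnotin wc ma wa hmasub hwcx hwcv (Ne.symm hac))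
          hmbE (hnotin wc mb wb hmbsub hwcx hwcv (Ne.symm hbc)) hfcma hfcmb hmamb
        obtain ⟨mc, hmcE, hmcsub, hwcmc, _⟩ := hgetm wc hwc
        obtain ⟨md, hmdE, hmdsub, hwdmd, _⟩ := hgetm wd hwd
        have hmcval : mc = fd := by
          rcases hPd mc hmcE (hnotin wd mc wc hmcsub hwdx hwdv (Ne.symm hcd)) with h | h | h
          · exact h
          · exfalso
            have : wa ∈ mc := h ▸ hwama
            have := hmcsub this
            simp only [Finset.mem_insert, Finset.mem_singleton] at this
            rcases this with h' | h' | h'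
            exacts [hwax h', hwav h', hac h']
          · exfalso
            have : wb ∈ mc := h ▸ hwbmb
            have := hmcsub this
            simp only [Finset.mem_insert, Finset.mem_singleton] at this
            rcases this with h' | h' | h'
            exacts [hwbx h', hwbv h', hbc h']
        have hmdval : md = fc := by
          rcases hPc md hmdE (hnotin wc md wd hmdsub hwcx hwcv hcd) with h | h | h
          · exact h
          · exfalso
            have : wa ∈ md := h ▸ hwama
            have := hmdsub this
            simp only [Finset.mem_insert, Finset.mem_singleton] at this
            rcases this with h' | h' | h'
            exacts [hwax h', hwav h', had h']
          · exfalso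
            have : wb ∈ md := h ▸ hwbmb
            have := hmdsub this
            simp only [Finset.mem_insert, Finset.mem_singleton] at this
            rcases this with h' | h' | h'
            exacts [hwbx h', hwbv h', hbd h']
        have hfdval : fd = ({v, wc} : Finset V) := by
          rw [← hmcval]
          apply eq_pair (hE2 mc hmcE)
          intro t ht
          have := hmcsub ht
          simp only [Finset.mem_insert, Finset.mem_singleton] at this ⊢
          rcases this with h | h | h
          · exact absurd (h ▸ ht) (hmcval ▸ hxfd)
          · exact Or.inl h
          · exact Or.inr h
        have hfcval : fc = ({v, wd} : Finset V) := by
          rw [← hmdval]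
          apply eq_pair (hE2 md hmdE)
          intro t ht
          have := hmdsub ht
          simp only [Finset.mem_insert, Finset.mem_singleton] at this ⊢
          rcases this with h | h | h
          · exact absurd (h ▸ ht) (hmdval ▸ hxfc)
          · exact Or.inl h
          · exact Or.inr h
        have hfcfd : fc ≠ fd := by
          intro he
          have : wd ∈ fd := by rw [← he, hfcval]; simp
          exact hwdfd this
        have hwcfd : wc ∈ fd := by rw [hfdval]; simp
        have hwdfc : wd ∈ fc := by rw [hfcval]; simp
        -- the pair (wc, wd)
        obtain ⟨m', hm'E, hm'sub⟩ : ∃ m' ∈ E, m' ⊆ ({x, wc, wd} : Finset V) := by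
          rcases hfdor with h | h
          · -- fd = f1 : wc ∈ f1 ∩ f3, wd ∈ f2 (= fc)
            have hfc2 : fc = f2 := by
              rcases hfcor with h' | h'
              · exact absurd (h'.trans h.symm) hfcfd
              · exact h'
            exact hblock wc wd (Or.inr (Or.inl ⟨h ▸ hwcfd, hwc, hfc2 ▸ hwdfc⟩))
          · have hfc1 : fc = f1 := by
              rcases hfcor with h' | h'
              · exact h'
              · exact absurd (h'.trans h.symm) hfcfd
            exact hblock wc wd (Or.inr (Or.inr ⟨h ▸ hwcfd, hwc, hfc1 ▸ hwdfc⟩))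
        -- wa's exactness kills m'
        have hwaf1 : wa ∉ f1 := by
          intro hh
          rcases hfdor with h | h
          · have : wa ∈ fd := h ▸ hh
            rw [hfdval] at this
            simp only [Finset.mem_insert, Finset.mem_singleton] at this
            rcases this with h' | h'
            exacts [hwav h', hac h']
          · have hfc1 : fc = f1 := by
              rcases hfcor with h' | h'
              · exact h'
              · exact absurd (h'.trans h.symm) hfcfd
            have : wa ∈ fc := hfc1 ▸ hh
            rw [hfcval] at this
            simp only [Finset.mem_insert, Finset.mem_singleton] at this
            rcases this with h' | h'
            exacts [hwav h', had h']
        have hwaf2 : wa ∉ f2 := by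
          intro hh
          rcases hfdor with h | h
          · have hfc2 : fc = f2 := by
              rcases hfcor with h' | h'
              · exact absurd (h'.trans h.symm) hfcfd
              · exact h'
            have : wa ∈ fc := hfc2 ▸ hh
            rw [hfcval] at this
            simp only [Finset.mem_insert, Finset.mem_singleton] at this
            rcases this with h' | h'
            exacts [hwav h', had h']
          · have : wa ∈ fd := h ▸ hh
            rw [hfdval] at this
            simp only [Finset.mem_insert, Finset.mem_singleton] at this
            rcases this with h' | h'
            exacts [hwav h', hac h']
        have hf1mb : f1 ≠ mb := fun h => hxf1 (h ▸ hxmb)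
        have hf2mb : f2 ≠ mb := fun h => hxf2 (h ▸ hxmb)
        have hPa := exact_of_three (hm wa) hf1E hwaf1 hf2E hwaf2 hmbE
          (hnotin wa mb wb hmbsub hwax hwav hab) hd12 hf1mb hf2mb
        have hwam' : wa ∉ m' := by
          intro hh
          have := hm'sub hh
          simp only [Finset.mem_insert, Finset.mem_singleton] at this
          rcases this with h | h | h
          exacts [hwax h, hac h, had h]
        rcases hPa m' hm'E hwam' with h | h | h
        · -- m' = f1 contains v
          have hvm' : v ∈ m' := by
            rcases hfdor with h' | h'
            · rw [h, ← h', hfdval]; simp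
            · have hfc1 : fc = f1 := by
                rcases hfcor with h'' | h''
                · exact h''
                · exact absurd (h''.trans h'.symm) hfcfd
              rw [h, ← hfc1, hfcval]; simp
          have := hm'sub hvm'
          simp only [Finset.mem_insert, Finset.mem_singleton] at this
          rcases this with h' | h' | h'
          exacts [hvx h', hwcv h'.symm, hwdv h'.symm]
        · have hvm' : v ∈ m' := by
            rcases hfdor with h' | h'
            · have hfc2 : fc = f2 := by
                rcases hfcor with h'' | h''
                · exact absurd (h''.trans h'.symm) hfcfd
                · exact h''
              rw [h, ← hfc2, hfcval]; simp
            · rw [h, ← h', hfdval]; simp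
          have := hm'sub hvm'
          simp only [Finset.mem_insert, Finset.mem_singleton] at this
          rcases this with h' | h' | h'
          exacts [hvx h', hwcv h'.symm, hwdv h'.symm]
        · have : wb ∈ m' := h ▸ hwbmb
          have := hm'sub this
          simp only [Finset.mem_insert, Finset.mem_singleton] at this
          rcases this with h' | h' | h'
          exacts [hwbx h', hbc h', hbd h']
      -- pigeonhole: find two x-type blockers among four elements
      obtain ⟨w1, w2, w3, w4, hw1, hw2, hw3, hw4, h12, h13, h14, h23, h24, h34⟩ :=
        four_of_card hf3card
      obtain ⟨m1, hm1E, hm1sub, hw1m1, hc1⟩ := hgetm w1 hw1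
      obtain ⟨m2, hm2E, hm2sub, hw2m2, hc2⟩ := hgetm w2 hw2
      obtain ⟨m3, hm3E, hm3sub, hw3m3, hc3⟩ := hgetm w3 hw3
      obtain ⟨m4, hm4E, hm4sub, hw4m4, hc4⟩ := hgetm w4 hw4
      have hdelta : ∀ a b : V, a ∈ f3 → b ∈ f3 → a ≠ b →
          (f1 = {v, a} ∨ f2 = {v, a}) → (f1 = {v, b} ∨ f2 = {v, b}) →
          ∀ c : V, c ∈ f3 → c ≠ a → c ≠ b → (f1 = {v, c} ∨ f2 = {v, c}) → False := by
        intro a b ha hb hab' hda hdb c hc hca hcb hdc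
        rcases hda with h | h <;> rcases hdb with h' | h' <;> rcases hdc with h'' | h''
        · exact hab' (hpin f1 a b ha hb h h')
        · exact hab' (hpin f1 a b ha hb h h')
        · exact hca (hpin f1 c a hc ha h'' h)
        · exact hcb (hpin f2 c b hc hb h'' h')
        · exact hcb (hpin f1 c b hc hb h'' h')
        · exact hca (hpin f2 c a hc ha h'' h)
        · exact hab' (hpin f2 a b ha hb h h')
        · exact hab' (hpin f2 a b ha hb h h')
      -- among any three, at least one is x-type
      have hx3 : ∀ (a b c : V) (mA mB mC : Finset V), a ∈ f3 → b ∈ f3 → c ∈ f3 →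
          a ≠ b → a ≠ c → b ≠ c →
          (x ∈ mA ∨ f1 = {v, a} ∨ f2 = {v, a}) →
          (x ∈ mB ∨ f1 = {v, b} ∨ f2 = {v, b}) →
          (x ∈ mC ∨ f1 = {v, c} ∨ f2 = {v, c}) →
          x ∈ mA ∨ x ∈ mB ∨ x ∈ mC := by
        intro a b c mA mB mC ha hb hc hab' hac' hbc' hA hB hC
        rcases hA with h | h
        · exact Or.inl h
        rcases hB with h' | h'
        · exact Or.inr (Or.inl h')
        rcases hC with h'' | h''
        · exact Or.inr (Or.inr h'')
        exact absurd (hdelta a b ha hb hab' h h' c hc (Ne.symm hac') (Ne.symm hbc') h'')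
          not_false
      rcases hx3 w1 w2 w3 m1 m2 m3 hw1 hw2 hw3 h12 h13 h23 hc1 hc2 hc3 with hx | hx | hx
      · rcases hx3 w2 w3 w4 m2 m3 m4 hw2 hw3 hw4 h23 h24 h34 hc2 hc3 hc4 with hy | hy | hy
        · exact main w1 w2 w3 w4 hw1 hw2 hw3 hw4 h12 h13 h14 h23 h24 h34
            m1 m2 hm1E hm2E hm1sub hm2sub hw1m1 hw2m2 hx hy
        · exact main w1 w3 w2 w4 hw1 hw3 hw2 hw4 h13 h12 h14 (Ne.symm h23) h34 h24
            m1 m3 hm1E hm3E hm1sub hm3sub hw1m1 hw3m3 hx hy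
        · exact main w1 w4 w2 w3 hw1 hw4 hw2 hw3 h14 h12 h13 (Ne.symm h24) (Ne.symm h34) h23
            m1 m4 hm1E hm4E hm1sub hm4sub hw1m1 hw4m4 hx hy
      · rcases hx3 w1 w3 w4 m1 m3 m4 hw1 hw3 hw4 h13 h14 h34 hc1 hc3 hc4 with hy | hy | hy
        · exact main w2 w1 w3 w4 hw2 hw1 hw3 hw4 (Ne.symm h12) h23 h24 h13 h14 h34
            m2 m1 hm2E hm1E hm2sub hm1sub hw2m2 hw1m1 hx hy
        · exact main w2 w3 w1 w4 hw2 hw3 hw1 hw4 h23 (Ne.symm h12) h24 (Ne.symm h13) h34 h14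
            m2 m3 hm2E hm3E hm2sub hm3sub hw2m2 hw3m3 hx hy
        · exact main w2 w4 w1 w3 hw2 hw4 hw1 hw3 h24 (Ne.symm h12) h23 (Ne.symm h14)
            (Ne.symm h34) h13 m2 m4 hm2E hm4E hm2sub hm4sub hw2m2 hw4m4 hx hy
      · rcases hx3 w1 w2 w4 m1 m2 m4 hw1 hw2 hw4 h12 h14 h24 hc1 hc2 hc4 with hy | hy | hy
        · exact main w3 w1 w2 w4 hw3 hw1 hw2 hw4 (Ne.symm h13) (Ne.symm h23) h34 h12 h14 h24
            m3 m1 hm3E hm1E hm3sub hm1sub hw3m3 hw1m1 hx hy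
        · exact main w3 w2 w1 w4 hw3 hw2 hw1 hw4 (Ne.symm h23) (Ne.symm h13) h34 (Ne.symm h12)
            h24 h14 m3 m2 hm3E hm2E hm3sub hm2sub hw3m3 hw2m2 hx hy
        · exact main w3 w4 w1 w2 hw3 hw4 hw1 hw2 h34 (Ne.symm h13) (Ne.symm h23) (Ne.symm h14)
            (Ne.symm h24) h12 m3 m4 hm3E hm4E hm3sub hm4sub hw3m3 hw4m4 hx hy

theorem caseIII
    (hn : 6 ≤ Fintype.card V)
    (hm : ∀ v : V, Multiset.card (miss E v) = 3)
    (hE2 : ∀ e ∈ E, 2 ≤ e.card)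
    (hTri : ¬ ∃ a b c : V, a ≠ b ∧ a ≠ c ∧ b ≠ c ∧
      ({a, b} : Finset V) ∈ E ∧ ({a, c} : Finset V) ∈ E ∧ ({b, c} : Finset V) ∈ E)
    (hndom : ∀ x' y : V, x' ≠ y → ∃ g ∈ E, x' ∉ g ∧ y ∉ g)
    (x : V) (p q r : Finset V) (hdc : miss E x = {p, q, r})
    (hcov : ∀ w : V, w ≠ x → w ∈ p ∨ w ∈ q ∨ w ∈ r) :
    ∃ S : Finset V, (∀ g ∈ E, ∃ w ∈ g, w ∈ S) ∧ (∀ g ∈ E, ¬ g ⊆ S) := by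
  classical
  have hni : ∀ u : V, u ≠ x → u ∉ p ∨ u ∉ q ∨ u ∉ r := by
    intro u hux
    obtain ⟨g, hg, hgx, hgu⟩ := hndom x u (Ne.symm hux)
    rcases exact3 hdc g hg hgx with h | h | h
    · exact Or.inl (h ▸ hgu)
    · exact Or.inr (Or.inl (h ▸ hgu))
    · exact Or.inr (Or.inr (h ▸ hgu))
  by_cases e12 : p = q
  · exact caseIII_deg hn hm hE2 hTri x p q r hdc hni e12
  by_cases e13 : p = r
  · exact caseIII_deg hn hm hE2 hTri x p r q (hdc.trans (perm_swap23 p q r))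
      (fun u hux => by rcases hni u hux with h | h | h <;> tauto) e13
  by_cases e23 : q = r
  · exact caseIII_deg hn hm hE2 hTri x q r p (hdc.trans (perm_rot p q r))
      (fun u hux => by rcases hni u hux with h | h | h <;> tauto) e23
  by_cases hcov2 : ∃ v : V, (v ∈ p ∧ v ∈ q) ∨ (v ∈ p ∧ v ∈ r) ∨ (v ∈ q ∧ v ∈ r)
  · by_cases hgood : ∃ v' : V, ((v' ∈ p ∧ v' ∈ q) ∨ (v' ∈ p ∧ v' ∈ r) ∨ (v' ∈ q ∧ v' ∈ r)) ∧
        ({x, v'} : Finset V) ∉ E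
    · obtain ⟨v', hv'd, hv'E⟩ := hgood
      rcases hv'd with ⟨h1, h2⟩ | ⟨h1, h2⟩ | ⟨h1, h2⟩
      · exact caseIII_good hn hm hE2 hTri x v' p q r hdc hni hcov e12 e13 e23 h1 h2 hv'E
      · exact caseIII_good hn hm hE2 hTri x v' p r q (hdc.trans (perm_swap23 p q r))
          (fun u hux => by rcases hni u hux with h | h | h <;> tauto)
          (fun u hux => by rcases hcov u hux with h | h | h <;> tauto)
          e13 e12 (fun h => e23 h.symm) h1 h2 hv'E
      · exact caseIII_good hn hm hE2 hTri x v' q r p (hdc.trans (perm_rot p q r))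
          (fun u hux => by rcases hni u hux with h | h | h <;> tauto)
          (fun u hux => by rcases hcov u hux with h | h | h <;> tauto)
          e23 (Ne.symm e12) (Ne.symm e13) h1 h2 hv'E
    · push_neg at hgood
      obtain ⟨v, hv⟩ := hcov2
      exact caseIII_nogood hn hm hE2 x p q r hdc hni hcov e12 e13 e23 v hv hgood
  · exact caseIII_dempty hn hm hE2 x p q r hdc hcov e12 e13 e23 (fun v hv => hcov2 ⟨v, hv⟩)

end CaseLemmas

section Cases

variable (E : Multiset (Finset V))



/-- The key combinatorial lemma (backward direction). -/
theorem backward (hn : 6 ≤ Fintype.card V)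
    (hm : ∀ v : V, Multiset.card (miss E v) = 3)
    (hE2 : ∀ e ∈ E, 2 ≤ e.card)
    (hTri : ¬ ∃ a b c : V, a ≠ b ∧ a ≠ c ∧ b ≠ c ∧
      ({a, b} : Finset V) ∈ E ∧ ({a, c} : Finset V) ∈ E ∧ ({b, c} : Finset V) ∈ E) :
    ∃ S : Finset V, (∀ g ∈ E, ∃ w ∈ g, w ∈ S) ∧ (∀ g ∈ E, ¬ g ⊆ S) := by
  by_cases hdom : ∃ x y : V, x ≠ y ∧ ∀ g ∈ E, x ∉ g → y ∈ g
  · obtain ⟨x, y, hxy, hd⟩ := hdom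
    by_cases hxyE : ({x, y} : Finset V) ∈ E
    · exact caseI_edge hn hm hE2 hTri x y hxy hd hxyE
    · refine ⟨{x, y}, ?_, ?_⟩
      · intro g hg
        by_cases hx : x ∈ g
        · exact ⟨x, hx, by simp⟩
        · exact ⟨y, hd g hg hx, by simp⟩
      · intro g hg hsub
        exact hxyE ((eq_pair (hE2 g hg) hsub) ▸ hg)
  · push_neg at hdom
    have hnev : Nonempty V := by
      have : 0 < Fintype.card V := by omega
      exact Fintype.card_pos_iff.mp this
    obtain ⟨x⟩ := hnev
    obtain ⟨p, q, r, hdc⟩ := Multiset.card_eq_three.mp (hm x)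
    by_cases hout : ∃ w, w ≠ x ∧ w ∉ p ∧ w ∉ q ∧ w ∉ r
    · obtain ⟨w, hwx, hwp, hwq, hwr⟩ := hout
      exact caseII hn hm hE2 hTri hdom x w p q r hdc hwx hwp hwq hwr
    · push_neg at hout
      refine caseIII hn hm hE2 hTri hdom x p q r hdc ?_
      intro w hwx
      by_contra hcon
      push_neg at hcon
      exact hcon.2.2 (hout w hwx hcon.1 hcon.2.1)

end Cases

end TCol

/-- A multi-hypergraph on a finite vertex set `V` with `n ≥ 6` vertices, whose
hyperedges form a multiset `E` of `m` subsets of `V` in which every vertex has degree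
exactly `m - 3`, admits a proper two-coloring of its vertices (every hyperedge
contains vertices of both colors) if and only if every hyperedge has size at least
`2` and the hypergraph is triangle-free. -/
theorem proper_two_coloring_iff_size_two_and_triangle_free
    {V : Type*} [Fintype V] [DecidableEq V]
    (E : Multiset (Finset V))
    (hn : 6 ≤ Fintype.card V)
    (hdeg : ∀ v : V,
      Multiset.card (E.filter (fun e => v ∈ e)) + 3 = Multiset.card E) :
    (∃ χ : V → Bool, ∀ e ∈ E,
        (∃ v ∈ e, χ v = true) ∧ (∃ v ∈ e, χ v = false)) ↔
      ((∀ e ∈ E, 2 ≤ e.card) ∧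
        ¬ ∃ a b c : V, a ≠ b ∧ a ≠ c ∧ b ≠ c ∧
          ({a, b} : Finset V) ∈ E ∧ ({a, c} : Finset V) ∈ E ∧
          ({b, c} : Finset V) ∈ E) := by
  constructor
  · rintro ⟨χ, hχ⟩
    constructor
    · intro e he
      obtain ⟨⟨vt, hvt, ht⟩, ⟨vf, hvf, hf⟩⟩ := hχ e he
      have hne : vt ≠ vf := by
        rintro rfl; rw [ht] at hf; exact Bool.noConfusion hf
      exact Finset.one_lt_card.mpr ⟨vt, hvt, vf, hvf, hne⟩
    · rintro ⟨a, b, c, hab, hac, hbc, h1, h2, h3⟩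
      have key : ∀ u v : V, ({u, v} : Finset V) ∈ E → χ u ≠ χ v := by
        intro u v he hc
        obtain ⟨⟨vt, hvt, ht⟩, ⟨vf, hvf, hf⟩⟩ := hχ _ he
        simp only [Finset.mem_insert, Finset.mem_singleton] at hvt hvf
        rcases hvt with rfl | rfl <;> rcases hvf with rfl | rfl <;> simp_all
      have k1 := key a b h1
      have k2 := key a c h2
      have k3 := key b c h3
      revert k1 k2 k3
      cases (χ a) <;> cases (χ b) <;> cases (χ c) <;> simp
  · rintro ⟨hE2, hTri⟩
    have hm : ∀ v : V, Multiset.card (TCol.miss E v) = 3 := by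
      intro v
      have h := Multiset.filter_add_not (fun e => v ∈ e) E
      have h2 := congrArg Multiset.card h
      rw [Multiset.card_add] at h2
      have h3 := hdeg v
      unfold TCol.miss
      omega
    obtain ⟨S, hhit, hind⟩ := TCol.backward E hn hm hE2 hTri
    refine ⟨fun v => decide (v ∈ S), fun e he => ?_⟩
    obtain ⟨w, hw, hwS⟩ := hhit e he
    have hnot : ¬ e ⊆ S := hind e he
    obtain ⟨z, hz, hzS⟩ : ∃ z ∈ e, z ∉ S := by
      by_contra hcon
      push_neg at hcon
      exact hnot fun t ht => hcon t ht
    exact ⟨⟨w, hw, by simpa using hwS⟩, ⟨z, hz, by simpa using hzS⟩⟩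
end

section
/- Let T be a finite multiset of k-tuples admitting a nice partial c-coloring, and let R be a submultiset of T obtained by keeping, for each distinct k-tuple occurring in T, at most c copies (and at least min(c, multiplicity in T) copies). Then R admits a nice partial c-coloring. -/
/-- `f` is a *nice partial `c`-coloring* of the multiset `T` of tuples: the color
classes `f j` form disjoint submultisets of `T` (some tuples may stay uncolored), and
for each color `j` and every element `i` appearing in some tuple of `T` there is a
tuple of color `j` not containing `i`. -/
def NicePartialColoring (c : ℕ) (T : Multiset (Finset ℕ+))
    (f : Fin c → Multiset (Finset ℕ+)) : Prop :=
  (∑ j, f j) ≤ T ∧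
  ∀ j : Fin c, ∀ i : ℕ+, (∃ t ∈ T, i ∈ t) → ∃ t ∈ f j, i ∉ t

/-!
Keeping a single copy of each tuple in every color class preserves niceness, since niceness only
asks for the existence of suitable tuples of each color. Afterwards every tuple occurs at most
once per color, hence at most `c` times in total, and at most as often as in `T`; so the coloring
fits into any `R` keeping `min c (multiplicity in T)` copies of each tuple.
-/

namespace Multiset

variable {α : Type*} [DecidableEq α]

theorem count_sum_dedup_le_card {ι : Type*} [Fintype ι] (f : ι → Multiset α) (a : α) :
    (∑ i, (f i).dedup).count a ≤ Fintype.card ι := by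
  rw [count_sum']
  calc ∑ i, (f i).dedup.count a ≤ ∑ _i : ι, 1 :=
        Finset.sum_le_sum fun i _ => nodup_iff_count_le_one.1 (nodup_dedup (f i)) a
    _ = Fintype.card ι := by simp

theorem le_of_le_of_count_le_min {S T R : Multiset α} {c : ℕ} (hST : S ≤ T)
    (hS : ∀ a, S.count a ≤ c) (hR : ∀ a, min c (T.count a) ≤ R.count a) : S ≤ R :=
  le_iff_count.2 fun a => (le_min (hS a) (count_le_of_le a hST)).trans (hR a)

end Multiset

theorem NicePartialColoring.dedup {c : ℕ} {T : Multiset (Finset ℕ+)}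
    {g : Fin c → Multiset (Finset ℕ+)} (hg : NicePartialColoring c T g) :
    NicePartialColoring c T fun j => (g j).dedup := by
  refine ⟨(Finset.sum_le_sum fun j _ => Multiset.dedup_le (g j)).trans hg.1, fun j i hi => ?_⟩
  obtain ⟨t, ht, hit⟩ := hg.2 j i hi
  exact ⟨t, Multiset.mem_dedup.2 ht, hit⟩

theorem nice_partial_coloring_of_truncated_general
    (c : ℕ) (T R : Multiset (Finset ℕ+))
    (hRmin : ∀ t : Finset ℕ+, min c (T.count t) ≤ R.count t)
    (g : Fin c → Multiset (Finset ℕ+)) (hg : NicePartialColoring c T g) :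
    ∃ h : Fin c → Multiset (Finset ℕ+),
      (∑ j, h j) ≤ R ∧
      ∀ j : Fin c, ∀ i : ℕ+, (∃ t ∈ T, i ∈ t) → ∃ t ∈ h j, i ∉ t := by
  have hdedup := hg.dedup
  have hcount (t : Finset ℕ+) : (∑ j, (g j).dedup).count t ≤ c := by
    simpa using Multiset.count_sum_dedup_le_card g t
  exact ⟨fun j => (g j).dedup, Multiset.le_of_le_of_count_le_min hdedup.1 hcount hRmin, hdedup.2⟩

/-- Let `T` be a finite multiset of `k`-tuples admitting a nice partial `c`-coloring,
and let `R` be a submultiset of `T` obtained by keeping, for each distinct tuple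
occurring in `T`, at most `c` copies and at least `min c (multiplicity in T)` copies.
Then `R` admits a nice partial `c`-coloring (niceness taken with respect to the
elements appearing in tuples of `T`). -/
theorem nice_partial_coloring_of_truncated
    (k c : ℕ) (T R : Multiset (Finset ℕ+)) (hT : ∀ t ∈ T, t.card = k)
    (hRT : R ≤ T)
    (hRc : ∀ t : Finset ℕ+, R.count t ≤ c)
    (hRmin : ∀ t : Finset ℕ+, min c (T.count t) ≤ R.count t)
    (g : Fin c → Multiset (Finset ℕ+)) (hg : NicePartialColoring c T g) :
    ∃ h : Fin c → Multiset (Finset ℕ+),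
      (∑ j, h j) ≤ R ∧
      ∀ j : Fin c, ∀ i : ℕ+, (∃ t ∈ T, i ∈ t) → ∃ t ∈ h j, i ∉ t :=
  nice_partial_coloring_of_truncated_general c T R hRmin g hg
end
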